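/- arXiv:1812.09496 — 6 statements merged into one kernel-verified Lean document; each statement's English description precedes it below -/
import Mathlib

section
/- For every E-valued k-form μ on 𝔇E one has 𝔏_{Id_E}μ = μ; consequently 𝕕(ι_{Id_E}μ) + ι_{Id_E}(𝕕μ) = μ for k ≥ 1, so the contraction ι_{Id_E} is a contracting homotopy for the complex (Ω^•(𝔇E,E), 𝕕): in particular, every closed form of degree k ≥ 1 is exact, namely if 𝕕μ = 0 then μ = 𝕕(ι_{Id_E}μ). -/
structure VBDer (R E : Type*) [CommRing R] [Algebra ℝ R]
    [AddCommGroup E] [Module ℝ E] [Module R E] [IsScalarTower ℝ R E] where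
  D : E →ₗ[ℝ] E
  X : Derivation ℝ R R
  leibniz : ∀ (r : R) (u : E), D (r • u) = X r • u + r • D u

namespace VBDer

variable {R E : Type*} [CommRing R] [Algebra ℝ R]
  [AddCommGroup E] [Module ℝ E] [Module R E] [IsScalarTower ℝ R E]

theorem ext' {a b : VBDer R E} (hD : a.D = b.D) (hX : a.X = b.X) : a = b := by
  cases a; cases b; simp_all

instance : Zero (VBDer R E) := ⟨⟨0, 0, by simp⟩⟩

instance : Add (VBDer R E) :=
  ⟨fun a b => ⟨a.D + b.D, a.X + b.X, by
    intro r u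
    simp only [LinearMap.add_apply, a.leibniz, b.leibniz, Derivation.add_apply, add_smul, smul_add]
    abel⟩⟩

instance : Neg (VBDer R E) :=
  ⟨fun a => ⟨-a.D, -a.X, by
    intro r u
    simp only [LinearMap.neg_apply, a.leibniz, Derivation.neg_apply, neg_smul, smul_neg, neg_add]⟩⟩

@[simp] lemma zero_D : (0 : VBDer R E).D = 0 := rfl
@[simp] lemma zero_X : (0 : VBDer R E).X = 0 := rfl
@[simp] lemma add_D (a b : VBDer R E) : (a + b).D = a.D + b.D := rfl
@[simp] lemma add_X (a b : VBDer R E) : (a + b).X = a.X + b.X := rfl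
@[simp] lemma neg_D (a : VBDer R E) : (-a).D = -a.D := rfl
@[simp] lemma neg_X (a : VBDer R E) : (-a).X = -a.X := rfl

instance : AddCommGroup (VBDer R E) where
  add_assoc a b c := by refine ext' ?_ ?_ <;> simp [add_assoc]
  zero_add a := by refine ext' ?_ ?_ <;> simp
  add_zero a := by refine ext' ?_ ?_ <;> simp
  neg_add_cancel a := by refine ext' ?_ ?_ <;> simp
  add_comm a b := by refine ext' ?_ ?_ <;> simp [add_comm]
  nsmul := nsmulRec
  zsmul := zsmulRec

instance : SMul R (VBDer R E) :=
  ⟨fun r a => ⟨r • a.D, r • a.X, by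
    intro s u
    simp only [LinearMap.smul_apply, a.leibniz, smul_add, Derivation.coe_smul, Pi.smul_apply,
      smul_assoc, smul_smul]
    rw [mul_comm r s]⟩⟩

@[simp] lemma smul_D (r : R) (a : VBDer R E) : (r • a).D = r • a.D := rfl
@[simp] lemma smul_X (r : R) (a : VBDer R E) : (r • a).X = r • a.X := rfl

instance : Module R (VBDer R E) where
  one_smul a := by refine ext' ?_ ?_ <;> simp
  mul_smul r s a := by refine ext' ?_ ?_ <;> simp [mul_smul]
  smul_zero r := by refine ext' ?_ ?_ <;> simp
  smul_add r a b := by refine ext' ?_ ?_ <;> simp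
  add_smul r s a := by refine ext' ?_ ?_ <;> simp [add_smul]
  zero_smul a := by refine ext' ?_ ?_ <;> simp

end VBDer
namespace VBDer

variable {R E : Type*} [CommRing R] [Algebra ℝ R]
  [AddCommGroup E] [Module ℝ E] [Module R E] [IsScalarTower ℝ R E]

/-- The commutator bracket of derivations. -/
def bracket (a b : VBDer R E) : VBDer R E :=
  ⟨a.D ∘ₗ b.D - b.D ∘ₗ a.D, ⁅a.X, b.X⁆, by
    intro r u
    simp only [LinearMap.sub_apply, LinearMap.comp_apply, a.leibniz, b.leibniz, map_add,
      smul_add, smul_sub, Derivation.commutator_apply, sub_smul]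
    abel⟩

/-- The identity derivation `Id_E = (id_E, 0)`. -/
def idE : VBDer R E := ⟨LinearMap.id, 0, by simp⟩

/-- The derivation `(Φ, 0)` associated with an `R`-linear endomorphism `Φ` of `E`. -/
def ofEnd (Φ : E →ₗ[R] E) : VBDer R E :=
  ⟨LinearMap.restrictScalars ℝ Φ, 0, by intro r u; simp⟩

end VBDer

section Ops

variable {R E : Type*} [CommRing R] [Algebra ℝ R]
  [AddCommGroup E] [Module ℝ E] [Module R E] [IsScalarTower ℝ R E]

/-- Contraction `ι_x μ := μ(x, -, …, -)` of an `E`-valued form. -/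
def iotaF {M : Type*} {k : ℕ} (x : M) (μ : (Fin (k + 1) → M) → E) :
    (Fin k → M) → E :=
  fun v => μ (Fin.cons x v)

/-- Lie derivative of an `E`-valued form on `𝔇E` along a derivation. -/
def lieF {k : ℕ} (d : VBDer R E) (μ : (Fin k → VBDer R E) → E) :
    (Fin k → VBDer R E) → E :=
  fun v => d.D (μ v) - ∑ i, μ (Function.update v i (VBDer.bracket d (v i)))

/-- Lie derivative of an `E`-valued form on `Der(R)` along a derivation of `E`. -/
def lieDer {k : ℕ} (d : VBDer R E) (lam : (Fin k → Derivation ℝ R R) → E) :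
    (Fin k → Derivation ℝ R R) → E :=
  fun X => d.D (lam X) - ∑ i, lam (Function.update X i ⁅d.X, X i⁆)

/-- The index of the `(l-1)`-st element of a tuple indexed by `Fin (k+1)` after the
positions `i < j` have been removed. -/
def dIdx {k : ℕ} (i j : Fin (k + 1)) (l : Fin k) : Fin (k + 1) :=
  if (l : ℕ) - 1 < (i : ℕ) then ⟨(l : ℕ) - 1, by have := l.isLt; omega⟩
  else if (l : ℕ) < (j : ℕ) then ⟨(l : ℕ), by have := l.isLt; omega⟩
  else ⟨(l : ℕ) + 1, by have := l.isLt; omega⟩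

/-- The tuple `([𝔡ᵢ, 𝔡ⱼ], 𝔡₀, …, 𝔡̂ᵢ, …, 𝔡̂ⱼ, …, 𝔡ₖ)`. -/
def pairTuple {k : ℕ} (v : Fin (k + 1) → VBDer R E) (i j : Fin (k + 1)) :
    Fin k → VBDer R E :=
  fun l => if (l : ℕ) = 0 then VBDer.bracket (v i) (v j) else v (dIdx i j l)

/-- The de Rham (Chevalley–Eilenberg) differential of `E`-valued forms on `𝔇E`. -/
def dF {k : ℕ} (μ : (Fin k → VBDer R E) → E) : (Fin (k + 1) → VBDer R E) → E :=
  fun v =>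
    (∑ i : Fin (k + 1), ((-1 : ℤ) ^ (i : ℕ)) • (v i).D (μ fun l => v (i.succAbove l))) +
      ∑ i : Fin (k + 1), ∑ j : Fin (k + 1),
        if i < j then ((-1 : ℤ) ^ ((i : ℕ) + (j : ℕ))) • μ (pairTuple v i j) else 0

/-- The pull-back `𝕛*λ` of a form on `Der(R)` along the symbol map. -/
def jStar {k : ℕ} (lam : (Fin k → Derivation ℝ R R) → E) :
    (Fin k → VBDer R E) → E :=
  fun v => lam fun i => (v i).X

/-- `μ` is an `R`-multilinear alternating map. -/
def IsMultAlt (R : Type*) {E M : Type*} [CommRing R] [AddCommGroup E] [Module R E]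
    [AddCommGroup M] [Module R M] {k : ℕ} (μ : (Fin k → M) → E) : Prop :=
  ∃ μ' : AlternatingMap R M E (Fin k), ⇑μ' = μ

/-- `lam` is an associated map for `μ`, i.e. `μ((Φ,0), 𝔡₂, …) = Φ(λ(𝕛𝔡₂, …))`. -/
def IsAssoc {k : ℕ} (μ : (Fin (k + 1) → VBDer R E) → E)
    (lam : (Fin k → Derivation ℝ R R) → E) : Prop :=
  ∀ (Φ : E →ₗ[R] E) (v : Fin k → VBDer R E),
    μ (Fin.cons (VBDer.ofEnd Φ) v) = Φ (lam fun i => (v i).X)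

/-- `μ` is a vector bundle form, i.e. an element of `Ω^{k+1}_𝔍`. -/
def IsVBForm {k : ℕ} (μ : (Fin (k + 1) → VBDer R E) → E) : Prop :=
  IsMultAlt R μ ∧
    ∃ lam : (Fin k → Derivation ℝ R R) → E, IsMultAlt R lam ∧ IsAssoc μ lam

/-- The symbol map `𝔇E → Der(R)` is surjective. -/
def SymbolSurj (R E : Type*) [CommRing R] [Algebra ℝ R]
    [AddCommGroup E] [Module ℝ E] [Module R E] [IsScalarTower ℝ R E] : Prop :=
  ∀ X : Derivation ℝ R R, ∃ d : VBDer R E, d.X = X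

/-- The higher Dorfman bracket on `ℰ_{n+1} = 𝔇E × Ω^{n+1}(𝔇E, E)`. -/
def Dorf {n : ℕ} (e₁ e₂ : VBDer R E × ((Fin (n + 1) → VBDer R E) → E)) :
    VBDer R E × ((Fin (n + 1) → VBDer R E) → E) :=
  (VBDer.bracket e₁.1 e₂.1, lieF e₁.1 e₂.2 - iotaF e₂.1 (dF e₁.2))

/-- The symmetric pairing on `ℰ_{n+1} = 𝔇E × Ω^{n+1}(𝔇E, E)`. -/
noncomputable def pairingP {n : ℕ} (e₁ e₂ : VBDer R E × ((Fin (n + 1) → VBDer R E) → E)) :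
    (Fin n → VBDer R E) → E :=
  (2⁻¹ : ℝ) • (iotaF e₁.1 e₂.2 + iotaF e₂.1 e₁.2)

end Ops

section ProofAux

variable {R E : Type*} [CommRing R] [Algebra ℝ R]
  [AddCommGroup E] [Module ℝ E] [Module R E] [IsScalarTower ℝ R E]

lemma bracket_idE_left (a : VBDer R E) : VBDer.bracket VBDer.idE a = 0 := by
  refine VBDer.ext' ?_ ?_ <;>
    simp [VBDer.bracket, VBDer.idE]

lemma cons_mk_succ {n : ℕ} {α : Type*} (x : α) (p : Fin n → α) (t : ℕ) (h : t + 1 < n + 1) :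
    (Fin.cons x p : Fin (n+1) → α) ⟨t + 1, h⟩ = p ⟨t, by omega⟩ := by
  have h2 : (⟨t+1, h⟩ : Fin (n+1)) = (⟨t, by omega⟩ : Fin n).succ := rfl
  rw [h2, Fin.cons_succ]

lemma pairTuple_apply_ne_zero {k : ℕ} (v : Fin (k + 1) → VBDer R E) (i j : Fin (k + 1))
    (l : Fin k) (hl : (l : ℕ) ≠ 0) : pairTuple v i j l = v (dIdx i j l) := by
  simp [pairTuple, hl]

lemma pairTuple_cons_succ {k : ℕ} (v : Fin (k + 1) → VBDer R E) (i j : Fin (k + 1))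
    (hij : i < j) :
    pairTuple (Fin.cons VBDer.idE v) i.succ j.succ
      = (Fin.cons VBDer.idE (pairTuple v i j)) ∘ Equiv.swap 0 1 := by
  have hk : 1 ≤ k := by
    have h1 : (i : ℕ) < (j : ℕ) := hij
    have h2 : (j : ℕ) < k + 1 := j.isLt
    omega
  have h1v : ((1 : Fin (k+1)) : ℕ) = 1 := by
    rw [Fin.val_one', Nat.mod_eq_of_lt (by omega)]
  funext l
  rcases l with ⟨t, ht⟩
  match t, ht with
  | 0, ht =>
      have hs : Equiv.swap (0 : Fin (k+1)) 1 ⟨0, ht⟩ = 1 := by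
        have h3 : (⟨0, ht⟩ : Fin (k+1)) = 0 := rfl
        rw [h3, Equiv.swap_apply_left]
      rw [Function.comp_apply, hs]
      have h1 : (1 : Fin (k+1)) = (⟨0+1, by omega⟩ : Fin (k+1)) := by
        ext; rw [h1v]
      rw [h1, cons_mk_succ]
      have hL : pairTuple (Fin.cons VBDer.idE v) i.succ j.succ ⟨0, ht⟩
          = VBDer.bracket ((Fin.cons VBDer.idE v : Fin (k+2) → VBDer R E) i.succ)
              ((Fin.cons VBDer.idE v : Fin (k+2) → VBDer R E) j.succ) := by
        simp [pairTuple]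
      rw [hL, Fin.cons_succ, Fin.cons_succ]
      simp [pairTuple]
  | 1, ht =>
      have hs : Equiv.swap (0 : Fin (k+1)) 1 ⟨1, ht⟩ = 0 := by
        have h3 : (⟨1, ht⟩ : Fin (k+1)) = 1 := by ext; rw [h1v]
        rw [h3, Equiv.swap_apply_right]
      rw [Function.comp_apply, hs, Fin.cons_zero]
      rw [pairTuple_apply_ne_zero _ _ _ _ (by norm_num)]
      have h5 : dIdx i.succ j.succ ⟨1, ht⟩ = ⟨0, by omega⟩ := by
        simp only [dIdx, Fin.val_succ]
        split_ifs with h1 h2 <;> simp only [Fin.ext_iff, Fin.val_mk] <;> omega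
      rw [h5]
      rfl
  | (t+2), ht =>
      have hne0 : (⟨t+2, ht⟩ : Fin (k+1)) ≠ 0 := by
        simp [Fin.ext_iff]
      have hne1 : (⟨t+2, ht⟩ : Fin (k+1)) ≠ 1 := by
        simp only [Fin.ne_iff_vne, h1v]
        omega
      rw [Function.comp_apply, Equiv.swap_apply_of_ne_of_ne hne0 hne1]
      have h6 : (⟨t+2, ht⟩ : Fin (k+1)) = (⟨(t+1)+1, ht⟩ : Fin (k+1)) := rfl
      rw [h6, cons_mk_succ]
      rw [pairTuple_apply_ne_zero _ _ _ _ (by norm_num)]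
      rw [pairTuple_apply_ne_zero _ _ _ _ (by norm_num)]
      by_cases hc1 : t < (i : ℕ)
      · have hd1 : dIdx i.succ j.succ ⟨t+1+1, ht⟩ = ⟨t+1, by omega⟩ := by
          simp only [dIdx, Fin.val_succ]
          split_ifs with h1 h2 <;> simp_all [Fin.ext_iff] <;> omega
        have hd2 : dIdx i j ⟨t+1, by omega⟩ = ⟨t, by omega⟩ := by
          simp only [dIdx]
          split_ifs with h1 h2 <;> simp_all [Fin.ext_iff] <;> omega
        rw [hd1, hd2, cons_mk_succ]
      · by_cases hc2 : t + 1 < (j : ℕ)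
        · have hd1 : dIdx i.succ j.succ ⟨t+1+1, ht⟩ = ⟨t+1+1, by omega⟩ := by
            simp only [dIdx, Fin.val_succ]
            split_ifs with h1 h2 <;> simp_all [Fin.ext_iff] <;> omega
          have hd2 : dIdx i j ⟨t+1, by omega⟩ = ⟨t+1, by omega⟩ := by
            simp only [dIdx]
            split_ifs with h1 h2 <;> simp_all [Fin.ext_iff] <;> omega
          rw [hd1, hd2, cons_mk_succ]
        · have hd1 : dIdx i.succ j.succ ⟨t+1+1, ht⟩ = ⟨(t+2)+1, by omega⟩ := by
            simp only [dIdx, Fin.val_succ]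
            split_ifs with h1 h2 <;> simp_all [Fin.ext_iff] <;> omega
          have hd2 : dIdx i j ⟨t+1, by omega⟩ = ⟨t+2, by omega⟩ := by
            simp only [dIdx]
            split_ifs with h1 h2 <;> simp_all [Fin.ext_iff] <;> omega
          rw [hd1, hd2, cons_mk_succ]

lemma mu_pairTuple {k : ℕ} (μ' : AlternatingMap R (VBDer R E) E (Fin (k+1)))
    (v : Fin (k + 1) → VBDer R E) (i j : Fin (k + 1)) (hij : i < j) :
    μ' (pairTuple (Fin.cons VBDer.idE v) i.succ j.succ)
      = - μ' (Fin.cons VBDer.idE (pairTuple v i j)) := by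
  have hk : 1 ≤ k := by
    have h1 : (i : ℕ) < (j : ℕ) := hij
    have h2 : (j : ℕ) < k + 1 := j.isLt
    omega
  have h1v : ((1 : Fin (k+1)) : ℕ) = 1 := by
    rw [Fin.val_one', Nat.mod_eq_of_lt (by omega)]
  have h01 : (0 : Fin (k+1)) ≠ 1 := by
    simp only [Fin.ne_iff_vne, Fin.val_zero, h1v]
    omega
  rw [pairTuple_cons_succ v i j hij, μ'.map_perm, Equiv.Perm.sign_swap h01]
  simp

end ProofAux

/-- `𝔏_{Id_E} μ = μ` for every `E`-valued form on `𝔇E`; consequently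
`𝕕 ∘ ι_{Id_E} + ι_{Id_E} ∘ 𝕕 = id` in positive degrees, so `ι_{Id_E}` is a contracting
homotopy for `(Ω^•(𝔇E,E), 𝕕)`: every closed form of positive degree is exact, namely
`𝕕μ = 0` implies `μ = 𝕕(ι_{Id_E} μ)`. -/
theorem contracting_homotopy (R E : Type*) [CommRing R] [Algebra ℝ R]
    [AddCommGroup E] [Module ℝ E] [Module R E] [IsScalarTower ℝ R E] (k : ℕ) :
    (∀ μ : (Fin k → VBDer R E) → E, IsMultAlt R μ → lieF VBDer.idE μ = μ) ∧
    (∀ μ : (Fin (k + 1) → VBDer R E) → E, IsMultAlt R μ →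
      dF (iotaF VBDer.idE μ) + iotaF VBDer.idE (dF μ) = μ ∧
      (dF μ = 0 → μ = dF (iotaF VBDer.idE μ))) := by
  constructor
  · rintro μ ⟨μ', rfl⟩
    funext v
    simp only [lieF]
    have h0 : ∀ i : Fin k, i ∈ Finset.univ →
        μ' (Function.update v i (VBDer.bracket VBDer.idE (v i))) = 0 := by
      intro i _
      rw [bracket_idE_left]
      exact μ'.map_update_zero v i
    rw [Finset.sum_eq_zero h0, sub_zero]
    simp [VBDer.idE]
  · rintro μ ⟨μ', rfl⟩
    have key : dF (iotaF VBDer.idE ⇑μ') + iotaF VBDer.idE (dF ⇑μ') = ⇑μ' := by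
      funext v
      show dF (iotaF VBDer.idE ⇑μ') v + dF ⇑μ' (Fin.cons VBDer.idE v) = μ' v
      set e : VBDer R E := VBDer.idE with he
      set w : Fin (k+2) → VBDer R E := Fin.cons e v with hw
      simp only [dF]
      have hT1 : (∑ i : Fin (k+2), ((-1:ℤ)^(i:ℕ)) • (w i).D (μ' fun l => w (i.succAbove l)))
          = μ' v - ∑ i : Fin (k+1),
              ((-1:ℤ)^(i:ℕ)) • (v i).D ((iotaF e ⇑μ') fun l => v (i.succAbove l)) := by
        rw [Fin.sum_univ_succ, sub_eq_add_neg, ← Finset.sum_neg_distrib]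
        congr 1
        · have harg : (fun l => w ((0 : Fin (k+2)).succAbove l)) = v := by
            funext l
            rw [Fin.succAbove_zero]
            simp [hw]
          rw [harg]
          simp [hw, he, VBDer.idE]
        · apply Finset.sum_congr rfl
          intro i _
          have harg : (fun l => w (i.succ.succAbove l))
              = Fin.cons e (fun l => v (i.succAbove l)) := by
            funext l
            cases l using Fin.cases with
            | zero => rw [Fin.succ_succAbove_zero]; simp [hw]
            | succ m => rw [Fin.succ_succAbove_succ]; simp [hw]
          rw [harg]
          have hwv : w i.succ = v i := by simp [hw]
          rw [hwv]
          have hsign : ((-1:ℤ)^((i.succ : Fin (k+2)) : ℕ)) = -((-1:ℤ)^(i:ℕ)) := by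
            rw [Fin.val_succ, pow_succ]
            ring
          rw [hsign, neg_smul]
          rfl
      have hT2 : (∑ i : Fin (k+2), ∑ j : Fin (k+2),
            if i < j then ((-1:ℤ)^((i:ℕ)+(j:ℕ))) • μ' (pairTuple w i j) else 0)
          = - ∑ i : Fin (k+1), ∑ j : Fin (k+1),
              if i < j then ((-1:ℤ)^((i:ℕ)+(j:ℕ))) • (iotaF e ⇑μ') (pairTuple v i j) else 0 := by
        rw [Fin.sum_univ_succ]
        have h1 : (∑ j : Fin (k+2), if (0 : Fin (k+2)) < j then
            ((-1:ℤ)^(((0 : Fin (k+2)):ℕ)+(j:ℕ))) • μ' (pairTuple w 0 j) else 0) = 0 := by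
          apply Finset.sum_eq_zero
          intro j _
          have hz : μ' (pairTuple w 0 j) = 0 := by
            apply μ'.map_coord_zero (i := (0 : Fin (k+1)))
            show pairTuple w 0 j 0 = 0
            have hw0 : w 0 = e := by simp [hw]
            simp [pairTuple, hw0, he, bracket_idE_left]
          rw [hz, smul_zero, ite_self]
        rw [h1, zero_add, ← Finset.sum_neg_distrib]
        apply Finset.sum_congr rfl
        intro i _
        rw [Fin.sum_univ_succ, ← Finset.sum_neg_distrib]
        have h2 : (if i.succ < (0 : Fin (k+2)) then
            ((-1:ℤ)^((i.succ:ℕ)+((0 : Fin (k+2)):ℕ))) • μ' (pairTuple w i.succ 0) else 0) = 0 :=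
          if_neg (Fin.not_lt_zero _)
        rw [h2, zero_add]
        apply Finset.sum_congr rfl
        intro j _
        by_cases h : i < j
        · rw [if_pos (Fin.succ_lt_succ_iff.mpr h), if_pos h]
          have hm : μ' (pairTuple w i.succ j.succ) = - μ' (Fin.cons e (pairTuple v i j)) := by
            rw [hw, he]
            exact mu_pairTuple μ' v i j h
          rw [hm]
          have hsign : ((-1:ℤ)^((i.succ:ℕ)+((j.succ : Fin (k+2)):ℕ)))
              = ((-1:ℤ)^((i:ℕ)+(j:ℕ))) := by
            rw [Fin.val_succ, Fin.val_succ,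
              show (i:ℕ) + 1 + ((j:ℕ) + 1) = ((i:ℕ) + (j:ℕ)) + 2 from by ring,
              pow_add]
            norm_num
          rw [hsign, smul_neg]
          rfl
        · rw [if_neg (fun hc => h (Fin.succ_lt_succ_iff.mp hc)), if_neg h, neg_zero]
      rw [hT1, hT2]
      abel
    refine ⟨key, fun h => ?_⟩
    have h2 : iotaF (VBDer.idE : VBDer R E) (dF ⇑μ') = 0 := by
      funext u
      show dF ⇑μ' (Fin.cons VBDer.idE u) = 0
      rw [h]
      rfl
    calc ⇑μ' = dF (iotaF VBDer.idE ⇑μ') + iotaF VBDer.idE (dF ⇑μ') := key.symm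
      _ = dF (iotaF VBDer.idE ⇑μ') := by rw [h2, add_zero]
end

section
/- If μ ∈ Ω^l_𝔍 is a vector bundle form with associated map λ_μ and 𝔡 ∈ 𝔇E, then the contraction ι_𝔡μ is a vector bundle form in Ω^{l−1}_𝔍, and −ι_{𝕛(𝔡)}λ_μ is an associated map for it. -/
/-
Contraction preserves `R`-multilinear alternating maps (it is `AlternatingMap.curryLeft`). For the
associated map, put `(Φ, 0)` in front of `𝔡` by swapping the first two arguments of `μ`, which
costs a sign, and then apply the defining property of `λ_μ`.
-/

namespace IsMultAlt

variable {R E M : Type*} [CommRing R] [AddCommGroup E] [Module R E] [AddCommGroup M] [Module R M]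

theorem neg {k : ℕ} {μ : (Fin k → M) → E} (hμ : IsMultAlt R μ) : IsMultAlt R (-μ) := by
  obtain ⟨μ', rfl⟩ := hμ
  exact ⟨-μ', rfl⟩

theorem iotaF {k : ℕ} {μ : (Fin (k + 1) → M) → E} (hμ : IsMultAlt R μ) (x : M) :
    IsMultAlt R (_root_.iotaF x μ) := by
  obtain ⟨μ', rfl⟩ := hμ
  exact ⟨μ'.curryLeft x, rfl⟩

theorem map_cons_cons_swap {k : ℕ} {μ : (Fin (k + 2) → M) → E} (hμ : IsMultAlt R μ)
    (a b : M) (v : Fin k → M) :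
    μ (Fin.cons a (Fin.cons b v)) = -μ (Fin.cons b (Fin.cons a v)) := by
  obtain ⟨μ', rfl⟩ := hμ
  rw [← μ'.map_swap _ Fin.zero_ne_one]
  exact congrArg μ' (Matrix.cons_cons_comp_swap_zero_one b a v).symm

end IsMultAlt

theorem IsAssoc.iotaF {R E : Type*} [CommRing R] [Algebra ℝ R]
    [AddCommGroup E] [Module ℝ E] [Module R E] [IsScalarTower ℝ R E] {k : ℕ}
    {μ : (Fin (k + 2) → VBDer R E) → E} {lam : (Fin (k + 1) → Derivation ℝ R R) → E}
    (hμ : IsMultAlt R μ) (hassoc : IsAssoc μ lam) (𝔡 : VBDer R E) :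
    IsAssoc (_root_.iotaF 𝔡 μ) (-(_root_.iotaF 𝔡.X lam)) := by
  intro Φ w
  have hsymbols : (fun i => (Fin.cons 𝔡 w : Fin (k + 1) → VBDer R E) i |>.X)
      = Fin.cons 𝔡.X fun i => (w i).X := by
    funext i
    exact Fin.cases rfl (fun _ => rfl) i
  calc _root_.iotaF 𝔡 μ (Fin.cons (VBDer.ofEnd Φ) w)
      = -μ (Fin.cons (VBDer.ofEnd Φ) (Fin.cons 𝔡 w)) := hμ.map_cons_cons_swap _ _ _
    _ = Φ ((-(_root_.iotaF 𝔡.X lam)) fun i => (w i).X) := by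
      rw [hassoc, hsymbols, Pi.neg_apply, map_neg]
      rfl

/-- The contraction `ι_𝔡 μ` of a vector bundle form `μ ∈ Ω^{k+2}_𝔍` with a
derivation `𝔡` is a vector bundle form in `Ω^{k+1}_𝔍`, and `-ι_{𝕛(𝔡)} λ_μ` is an associated
map for it. -/
theorem contraction_vb_form (R E : Type*) [CommRing R] [Algebra ℝ R]
    [AddCommGroup E] [Module ℝ E] [Module R E] [IsScalarTower ℝ R E]
    (k : ℕ) (𝔡 : VBDer R E)
    (μ : (Fin (k + 2) → VBDer R E) → E) (hμ : IsMultAlt R μ)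
    (lam : (Fin (k + 1) → Derivation ℝ R R) → E) (hlam : IsMultAlt R lam)
    (hassoc : IsAssoc μ lam) :
    IsVBForm (iotaF 𝔡 μ) ∧ IsAssoc (iotaF 𝔡 μ) (-(iotaF 𝔡.X lam)) := by
  have hassoc_iota := hassoc.iotaF hμ 𝔡
  exact ⟨⟨hμ.iotaF 𝔡, _, (hlam.iotaF 𝔡.X).neg, hassoc_iota⟩, hassoc_iota⟩
end

section
/- The symmetric pairing is invariant under the higher Dorfman bracket: for all e_1, e_2, e_3 ∈ ℰ_n, 𝔏_{ρ(e_1)}((e_2, e_3)_+) = ({e_1, e_2}, e_3)_+ + (e_2, {e_1, e_3})_+. -/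
section AuxProof

variable {R E : Type*} [CommRing R] [Algebra ℝ R]
  [AddCommGroup E] [Module ℝ E] [Module R E] [IsScalarTower ℝ R E]

/-- Universal evaluator for a double cons. -/
lemma cons_cons_eval {α : Type*} {k : ℕ} (x y : α) (v : Fin k → α) (j : Fin (k + 2)) :
    (Fin.cons x (Fin.cons y v) : Fin (k + 2) → α) j =
      if h0 : (j : ℕ) = 0 then x
      else if h1 : (j : ℕ) = 1 then y
      else v ⟨(j : ℕ) - 2, by have := j.isLt; omega⟩ := by
  refine Fin.cases ?_ (fun q => ?_) j
  · simp
  · refine Fin.cases ?_ (fun p => ?_) q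
    · simp
    · simp only [Fin.cons_succ, Fin.val_succ]
      rw [dif_neg (by omega), dif_neg (by omega)]
      congr 1 <;> exact Fin.ext (by simp)

lemma bracket_skew (a b : VBDer R E) : VBDer.bracket b a = - VBDer.bracket a b := by
  refine VBDer.ext' ?_ ?_
  · show b.D ∘ₗ a.D - a.D ∘ₗ b.D = -(a.D ∘ₗ b.D - b.D ∘ₗ a.D)
    abel
  · show ⁅b.X, a.X⁆ = -⁅a.X, b.X⁆
    rw [← lie_skew]

lemma lieF_iotaF {k : ℕ} (d a : VBDer R E) (τ : (Fin (k + 1) → VBDer R E) → E) :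
    lieF d (iotaF a τ) = iotaF (VBDer.bracket d a) τ + iotaF a (lieF d τ) := by
  funext v
  simp only [lieF, iotaF, Pi.add_apply, Fin.sum_univ_succ, Fin.cons_zero, Fin.cons_succ,
    Fin.update_cons_zero, ← Fin.cons_update]
  abel

lemma lieF_add {k : ℕ} (d : VBDer R E) (f g : (Fin k → VBDer R E) → E) :
    lieF d (f + g) = lieF d f + lieF d g := by
  funext v
  simp only [lieF, Pi.add_apply, map_add, Finset.sum_add_distrib]
  abel

lemma lieF_smul {k : ℕ} (d : VBDer R E) (c : ℝ) (f : (Fin k → VBDer R E) → E) :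
    lieF d (c • f) = c • lieF d f := by
  funext v
  simp only [lieF, Pi.smul_apply, map_smul, smul_sub, Finset.smul_sum]

lemma iotaF_sub {k : ℕ} (x : VBDer R E) (f g : (Fin (k + 1) → VBDer R E) → E) :
    iotaF x (f - g) = iotaF x f - iotaF x g := rfl

lemma mu_cons_neg {k : ℕ} (μ' : AlternatingMap R (VBDer R E) E (Fin (k + 1)))
    (x : VBDer R E) (v : Fin k → VBDer R E) :
    μ' (Fin.cons (-x) v) = - μ' (Fin.cons x v) := by
  calc μ' (Fin.cons (-x) v) = μ' (Function.update (Fin.cons x v) 0 (-x)) := by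
        rw [Fin.update_cons_zero]
    _ = - μ' (Function.update (Fin.cons x v) 0 x) := μ'.map_update_neg _ _ _
    _ = - μ' (Fin.cons x v) := by rw [Fin.update_cons_zero]

lemma alt_swap01 {k : ℕ} (μ' : AlternatingMap R (VBDer R E) E (Fin (k + 2)))
    (x y : VBDer R E) (r : Fin k → VBDer R E) :
    μ' (Fin.cons y (Fin.cons x r)) = - μ' (Fin.cons x (Fin.cons y r)) := by
  have h : (Fin.cons y (Fin.cons x r) : Fin (k + 2) → VBDer R E) =
      (Fin.cons x (Fin.cons y r)) ∘ Equiv.swap 0 1 := by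
    funext l
    rw [Function.comp_apply, Equiv.swap_apply_def]
    split_ifs with h1 h2
    · subst h1
      rw [cons_cons_eval, cons_cons_eval]
      simp
    · subst h2
      rw [cons_cons_eval, cons_cons_eval]
      simp
    · rw [cons_cons_eval, cons_cons_eval]
      have hv1 : (l : ℕ) ≠ 0 := fun h => h1 (Fin.ext (by simpa using h))
      have hv2 : (l : ℕ) ≠ 1 := fun h => h2 (Fin.ext (by simpa using h))
      rw [dif_neg hv1, dif_neg hv1, dif_neg hv2, dif_neg hv2]
  rw [h]
  exact μ'.map_swap _ (by simp)

lemma sign_cancel (t : ℕ) (X : E) :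
    ((-1 : ℤ) ^ (0 + t)) • X + ((-1 : ℤ) ^ (1 + t)) • X = 0 := by
  simp [pow_add, pow_zero, pow_one, neg_smul]

/-- Decomposition of the double sum with the `i < j` condition. -/
lemma dSum_decomp {n : ℕ} (g : Fin (n + 2) → Fin (n + 2) → E) :
    (∑ i : Fin (n + 2), ∑ j : Fin (n + 2), if i < j then g i j else 0) =
      g 0 (Fin.succ 0) + ((∑ p : Fin n, g 0 p.succ.succ) +
        ((∑ p : Fin n, g (Fin.succ 0) p.succ.succ) +
          ∑ m : Fin n, ∑ p : Fin n, if m < p then g m.succ.succ p.succ.succ else 0)) := by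
  simp only [Fin.sum_univ_succ, Fin.succ_lt_succ_iff, Fin.succ_pos, Fin.not_lt_zero,
    lt_self_iff_false, if_true, if_false, Finset.sum_const_zero, zero_add, add_zero]
  abel

lemma cancel_abstract {n : ℕ} (f f' : Fin (n + 2) → E) (g g' : Fin (n + 2) → Fin (n + 2) → E)
    (e1 : f 0 + f' (Fin.succ 0) = 0) (e2 : f (Fin.succ 0) + f' 0 = 0)
    (e3 : ∀ m : Fin n, f m.succ.succ + f' m.succ.succ = 0)
    (g1 : g 0 (Fin.succ 0) + g' 0 (Fin.succ 0) = 0)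
    (g2 : ∀ p : Fin n, g 0 p.succ.succ + g' (Fin.succ 0) p.succ.succ = 0)
    (g3 : ∀ p : Fin n, g (Fin.succ 0) p.succ.succ + g' 0 p.succ.succ = 0)
    (g4 : ∀ m p : Fin n, m < p →
      g m.succ.succ p.succ.succ + g' m.succ.succ p.succ.succ = 0) :
    ((∑ i : Fin (n + 2), f i) +
        ∑ i : Fin (n + 2), ∑ j : Fin (n + 2), if i < j then g i j else 0) +
      ((∑ i : Fin (n + 2), f' i) +
        ∑ i : Fin (n + 2), ∑ j : Fin (n + 2), if i < j then g' i j else 0) = 0 := by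
  rw [dSum_decomp g, dSum_decomp g']
  simp only [Fin.sum_univ_succ]
  have E3 : (∑ m : Fin n, f m.succ.succ) + (∑ m : Fin n, f' m.succ.succ) = 0 := by
    rw [← Finset.sum_add_distrib]; exact Finset.sum_eq_zero fun m _ => e3 m
  have G2 : (∑ p : Fin n, g 0 p.succ.succ) +
      (∑ p : Fin n, g' (Fin.succ 0) p.succ.succ) = 0 := by
    rw [← Finset.sum_add_distrib]; exact Finset.sum_eq_zero fun p _ => g2 p
  have G3 : (∑ p : Fin n, g (Fin.succ 0) p.succ.succ) +
      (∑ p : Fin n, g' 0 p.succ.succ) = 0 := by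
    rw [← Finset.sum_add_distrib]; exact Finset.sum_eq_zero fun p _ => g3 p
  have G4 : (∑ m : Fin n, ∑ p : Fin n, if m < p then g m.succ.succ p.succ.succ else 0) +
      (∑ m : Fin n, ∑ p : Fin n, if m < p then g' m.succ.succ p.succ.succ else 0) = 0 := by
    rw [← Finset.sum_add_distrib]
    refine Finset.sum_eq_zero fun m _ => ?_
    rw [← Finset.sum_add_distrib]
    refine Finset.sum_eq_zero fun p _ => ?_
    split_ifs with h
    · exact g4 m p h
    · exact add_zero 0
  rw [add_eq_zero_iff_eq_neg.mp e1, add_eq_zero_iff_eq_neg.mp e2,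
    add_eq_zero_iff_eq_neg.mp g1, add_eq_zero_iff_eq_neg.mp E3, add_eq_zero_iff_eq_neg.mp G2,
    add_eq_zero_iff_eq_neg.mp G3, add_eq_zero_iff_eq_neg.mp G4]
  abel

end AuxProof

section AuxProof2

variable {R E : Type*} [CommRing R] [Algebra ℝ R]
  [AddCommGroup E] [Module ℝ E] [Module R E] [IsScalarTower ℝ R E]

@[local simp] lemma val_mk' {k t : ℕ} (h : t < k) : ((⟨t, h⟩ : Fin k) : ℕ) = t := rfl

lemma sign_step (s : ℕ) (X Y : E) (h : X = Y) :
    ((-1 : ℤ) ^ s) • X + ((-1 : ℤ) ^ (s + 1)) • Y = 0 := by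
  rw [h, pow_succ, mul_smul, neg_one_zsmul, smul_neg, add_neg_cancel]

lemma sign_step' (s : ℕ) (X Y : E) (h : X = Y) :
    ((-1 : ℤ) ^ (s + 1)) • X + ((-1 : ℤ) ^ s) • Y = 0 := by
  rw [h, pow_succ, mul_smul, neg_one_zsmul, smul_neg, neg_add_cancel]

/-- Value-level evaluator for a double cons. -/
def evalCC {α : Type*} {k : ℕ} (x y : α) (v : Fin k → α) (t : ℕ) : α :=
  if t = 0 then x else if t = 1 then y else if h : t - 2 < k then v ⟨t - 2, h⟩ else x

lemma evalCC_spec {α : Type*} {k : ℕ} (x y : α) (v : Fin k → α) (u : Fin (k + 2)) :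
    (Fin.cons x (Fin.cons y v) : Fin (k + 2) → α) u = evalCC x y v (u : ℕ) := by
  refine Fin.cases ?_ (fun q => ?_) u
  · simp [evalCC]
  · refine Fin.cases ?_ (fun p => ?_) q
    · simp [evalCC]
    · simp only [Fin.cons_succ, evalCC, Fin.val_succ]
      rw [if_neg (by omega), if_neg (by omega), dif_pos (by have := p.isLt; omega)]
      congr 1 <;> first | rfl | (apply Fin.ext; simp <;> omega)

lemma dIdx_val {k : ℕ} (i j : Fin (k + 1)) (l : Fin k) :
    ((dIdx i j l : Fin (k + 1)) : ℕ) =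
      if (l : ℕ) - 1 < (i : ℕ) then (l : ℕ) - 1
      else if (l : ℕ) < (j : ℕ) then (l : ℕ) else (l : ℕ) + 1 := by
  unfold dIdx
  split_ifs <;> simp

set_option maxHeartbeats 1000000 in
lemma pT_01 {n : ℕ} (a b : VBDer R E) (v : Fin n → VBDer R E) :
    pairTuple (Fin.cons a (Fin.cons b v) : Fin (n + 2) → VBDer R E) 0 (Fin.succ 0) =
      Fin.cons (VBDer.bracket a b) v := by
  funext l
  refine Fin.cases ?_ (fun q => ?_) l
  · simp [pairTuple]
  · simp only [pairTuple, Fin.val_succ, Fin.cons_succ]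
    rw [if_neg (by omega)]
    rw [evalCC_spec]
    simp only [dIdx_val]
    simp only [Fin.val_succ, Fin.val_zero]
    simp only [show ¬ ((q : ℕ) + 1 - 1 < 0) by omega, show ¬ ((q : ℕ) + 1 < 0 + 1) by omega, if_false]
    simp only [evalCC]
    rw [if_neg (by omega), if_neg (by omega), dif_pos (by have := q.isLt; omega)]
    congr 1 <;> first | rfl | (apply Fin.ext; simp <;> omega)

set_option maxHeartbeats 1000000 in
lemma pT_B {n : ℕ} (a b : VBDer R E) (v : Fin n → VBDer R E) (p : Fin n) :
    pairTuple (Fin.cons a (Fin.cons b v) : Fin (n + 2) → VBDer R E) 0 p.succ.succ =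
      pairTuple (Fin.cons b (Fin.cons a v)) (Fin.succ 0) p.succ.succ := by
  funext l
  refine Fin.cases ?_ (fun q => ?_) l
  · simp [pairTuple, Fin.cons_succ]
  · simp only [pairTuple, Fin.val_succ]
    rw [if_neg (by omega), if_neg (by omega)]
    rw [evalCC_spec, evalCC_spec]
    simp only [dIdx_val]
    simp only [Fin.val_succ, Fin.val_zero]
    split_ifs <;> (simp only [evalCC]; split_ifs) <;>
      first
        | rfl
        | omega
        | (congr 1 <;> first | rfl | (apply Fin.ext; simp <;> omega))
        | (exact (‹False›).elim)
        | (exfalso; omega)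

set_option maxHeartbeats 1000000 in
lemma pT_C {n : ℕ} (a b : VBDer R E) (v : Fin n → VBDer R E) (m p : Fin n)
    (hn : 2 ≤ n) :
    pairTuple (Fin.cons b (Fin.cons a v) : Fin (n + 2) → VBDer R E) m.succ.succ p.succ.succ =
      (pairTuple (Fin.cons a (Fin.cons b v)) m.succ.succ p.succ.succ) ∘
        Equiv.swap (⟨1, by omega⟩ : Fin (n + 1)) ⟨2, by omega⟩ := by
  funext l
  rw [Function.comp_apply, Equiv.swap_apply_def]
  have hvs : ∀ l' : Fin (n + 1), (l' : ℕ) ≠ 0 →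
      pairTuple (Fin.cons b (Fin.cons a v) : Fin (n + 2) → VBDer R E) m.succ.succ p.succ.succ l'
        = evalCC b a v ((dIdx (m.succ.succ : Fin (n + 2)) p.succ.succ l' : Fin (n + 2)) : ℕ) := by
    intro l' h
    simp only [pairTuple]
    rw [if_neg h, evalCC_spec]
  have hvs' : ∀ l' : Fin (n + 1), (l' : ℕ) ≠ 0 →
      pairTuple (Fin.cons a (Fin.cons b v) : Fin (n + 2) → VBDer R E) m.succ.succ p.succ.succ l'
        = evalCC a b v ((dIdx (m.succ.succ : Fin (n + 2)) p.succ.succ l' : Fin (n + 2)) : ℕ) := by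
    intro l' h
    simp only [pairTuple]
    rw [if_neg h, evalCC_spec]
  split_ifs with h1 h2
  · subst h1
    rw [hvs _ (by simp), hvs' _ (by simp)]
    simp only [dIdx_val]
    simp only [Fin.val_succ, Fin.val_zero, val_mk']
    split_ifs <;> (simp only [evalCC]; split_ifs) <;>
      first
        | rfl
        | omega
        | (congr 1 <;> first | rfl | (apply Fin.ext; simp <;> omega))
        | (exact (‹False›).elim)
        | (exfalso; omega)
  · subst h2
    rw [hvs _ (by simp), hvs' _ (by simp)]
    simp only [dIdx_val]
    simp only [Fin.val_succ, Fin.val_zero, val_mk']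
    split_ifs <;> (simp only [evalCC]; split_ifs) <;>
      first
        | rfl
        | omega
        | (congr 1 <;> first | rfl | (apply Fin.ext; simp <;> omega))
        | (exact (‹False›).elim)
        | (exfalso; omega)
  · have hv1 : (l : ℕ) ≠ 1 := fun hh => h1 (Fin.ext (by simpa using hh))
    have hv2 : (l : ℕ) ≠ 2 := fun hh => h2 (Fin.ext (by simpa using hh))
    by_cases h0 : (l : ℕ) = 0
    · simp only [pairTuple]
      rw [if_pos h0, if_pos h0]
      simp [Fin.cons_succ]
    · rw [hvs _ h0, hvs' _ h0]
      simp only [dIdx_val]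
      simp only [Fin.val_succ, Fin.val_zero]
      split_ifs <;> (simp only [evalCC]; split_ifs) <;>
        first
          | rfl
          | omega
          | (congr 1 <;> first | rfl | (apply Fin.ext; simp <;> omega))
          | (exact (‹False›).elim)
          | (exfalso; omega)


set_option maxHeartbeats 1000000 in
lemma dF_swap {n : ℕ} (μ' : AlternatingMap R (VBDer R E) E (Fin (n + 1)))
    (a b : VBDer R E) (v : Fin n → VBDer R E) :
    dF (⇑μ') (Fin.cons a (Fin.cons b v)) + dF (⇑μ') (Fin.cons b (Fin.cons a v)) = 0 := by
  unfold dF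
  refine cancel_abstract _ _ _ _ ?_ ?_ ?_ ?_ ?_ ?_ ?_
  · have t1 : (fun l => (Fin.cons a (Fin.cons b v) : Fin (n + 2) → VBDer R E)
        ((0 : Fin (n + 2)).succAbove l)) = Fin.cons b v := by
      funext l; simp [Fin.zero_succAbove, Fin.cons_succ]
    have t2 : (fun l => (Fin.cons b (Fin.cons a v) : Fin (n + 2) → VBDer R E)
        ((Fin.succ (0 : Fin (n + 1))).succAbove l)) = Fin.cons b v := by
      funext l
      refine Fin.cases ?_ (fun q => ?_) l
      · simp [Fin.succ_succAbove_zero]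
      · simp [Fin.succ_succAbove_succ, Fin.zero_succAbove, Fin.cons_succ]
    rw [t1, t2]
    simp only [Fin.cons_zero, Fin.cons_succ, Fin.val_zero, Fin.val_succ, pow_zero, one_smul,
      zero_add, pow_one, neg_smul]
    exact add_neg_cancel _
  · have t1 : (fun l => (Fin.cons a (Fin.cons b v) : Fin (n + 2) → VBDer R E)
        ((Fin.succ (0 : Fin (n + 1))).succAbove l)) = Fin.cons a v := by
      funext l
      refine Fin.cases ?_ (fun q => ?_) l
      · simp [Fin.succ_succAbove_zero]
      · simp [Fin.succ_succAbove_succ, Fin.zero_succAbove, Fin.cons_succ]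
    have t2 : (fun l => (Fin.cons b (Fin.cons a v) : Fin (n + 2) → VBDer R E)
        ((0 : Fin (n + 2)).succAbove l)) = Fin.cons a v := by
      funext l; simp [Fin.zero_succAbove, Fin.cons_succ]
    rw [t1, t2]
    simp only [Fin.cons_zero, Fin.cons_succ, Fin.val_zero, Fin.val_succ, pow_zero, one_smul,
      zero_add, pow_one, neg_smul]
    exact neg_add_cancel _
  · intro m
    have hn : 0 < n := m.pos
    obtain ⟨n', rfl⟩ : ∃ n', n = n' + 1 := ⟨n - 1, by omega⟩
    set g : Fin n' → VBDer R E := fun p => v (m.succAbove p) with hg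
    have t3 : (fun l => (Fin.cons a (Fin.cons b v) : Fin (n' + 3) → VBDer R E)
        (m.succ.succ.succAbove l)) = Fin.cons a (Fin.cons b g) := by
      funext l
      refine Fin.cases ?_ (fun q => ?_) l
      · simp [Fin.succ_succAbove_zero]
      · refine Fin.cases ?_ (fun p => ?_) q
        · simp [Fin.succ_succAbove_succ, Fin.succ_succAbove_zero, Fin.cons_succ]
        · simp [Fin.succ_succAbove_succ, Fin.cons_succ, hg]
    have t4 : (fun l => (Fin.cons b (Fin.cons a v) : Fin (n' + 3) → VBDer R E)
        (m.succ.succ.succAbove l)) = Fin.cons b (Fin.cons a g) := by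
      funext l
      refine Fin.cases ?_ (fun q => ?_) l
      · simp [Fin.succ_succAbove_zero]
      · refine Fin.cases ?_ (fun p => ?_) q
        · simp [Fin.succ_succAbove_succ, Fin.succ_succAbove_zero, Fin.cons_succ]
        · simp [Fin.succ_succAbove_succ, Fin.cons_succ, hg]
    rw [t3, t4, show (μ' (Fin.cons b (Fin.cons a g)) : E) = - μ' (Fin.cons a (Fin.cons b g))
      from alt_swap01 μ' a b g]
    simp only [Fin.cons_succ, map_neg, smul_neg]
    exact add_neg_cancel _
  · rw [pT_01 a b v, pT_01 b a v, bracket_skew a b, mu_cons_neg]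
    simp only [smul_neg]
    exact add_neg_cancel _
  · intro p
    rw [pT_B a b v p]
    have hexp1 : ((0 : Fin (n + 2)) : ℕ) + ((p.succ.succ : Fin (n + 2)) : ℕ) = p.val + 2 := by
      simp <;> omega
    have hexp2 : ((Fin.succ 0 : Fin (n + 2)) : ℕ) + ((p.succ.succ : Fin (n + 2)) : ℕ)
        = p.val + 2 + 1 := by
      simp <;> omega
    rw [hexp1, hexp2]
    exact sign_step _ _ _ rfl
  · intro p
    rw [show pairTuple (Fin.cons b (Fin.cons a v) : Fin (n + 2) → VBDer R E) 0 p.succ.succ =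
        pairTuple (Fin.cons a (Fin.cons b v)) (Fin.succ 0) p.succ.succ from pT_B b a v p]
    have hexp1 : ((Fin.succ 0 : Fin (n + 2)) : ℕ) + ((p.succ.succ : Fin (n + 2)) : ℕ)
        = p.val + 2 + 1 := by
      simp <;> omega
    have hexp2 : ((0 : Fin (n + 2)) : ℕ) + ((p.succ.succ : Fin (n + 2)) : ℕ) = p.val + 2 := by
      simp <;> omega
    rw [hexp1, hexp2]
    exact sign_step' _ _ _ rfl
  · intro m p hmp
    have hn : 2 ≤ n := by
      have h1 : (m : ℕ) < (p : ℕ) := hmp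
      have := p.isLt
      omega
    rw [pT_C a b v m p hn, μ'.map_swap _ (by simp [Fin.ext_iff])]
    simp only [smul_neg]
    exact add_neg_cancel _

end AuxProof2

/-- The symmetric pairing is invariant under the higher Dorfman bracket:
`𝔏_{ρ(e₁)}((e₂,e₃)₊) = ({e₁,e₂}, e₃)₊ + (e₂, {e₁,e₃})₊`. -/
theorem pairing_invariance (R E : Type*) [CommRing R] [Algebra ℝ R]
    [AddCommGroup E] [Module ℝ E] [Module R E] [IsScalarTower ℝ R E]
    (n : ℕ) (e₁ e₂ e₃ : VBDer R E × ((Fin (n + 1) → VBDer R E) → E))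
    (h₁ : IsMultAlt R e₁.2) (h₂ : IsMultAlt R e₂.2) (h₃ : IsMultAlt R e₃.2) :
    lieF e₁.1 (pairingP e₂ e₃) = pairingP (Dorf e₁ e₂) e₃ + pairingP e₂ (Dorf e₁ e₃) := by
  obtain ⟨μ', hμ'⟩ := h₁
  have key : iotaF e₃.1 (iotaF e₂.1 (dF e₁.2)) = - iotaF e₂.1 (iotaF e₃.1 (dF e₁.2)) := by
    funext v
    have h := dF_swap μ' e₂.1 e₃.1 v
    rw [hμ'] at h
    rw [add_eq_zero_iff_eq_neg] at h
    simpa [iotaF] using h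
  simp only [pairingP, Dorf, lieF_smul, lieF_add, lieF_iotaF, iotaF_sub, key]
  module
end

section
/- Assume the symbol map is surjective, and fix n ≥ 1. Let B : 𝔇E → Ω^n(𝔇E,E) be an R-linear map such that B(𝔡) ∈ Ω^n_𝔍 for every 𝔡 ∈ 𝔇E and such that the skew-symmetry ι_{𝔡_1}B(𝔡_2) + ι_{𝔡_2}B(𝔡_1) = 0 holds for all 𝔡_1, 𝔡_2 ∈ 𝔇E. Then the map μ defined by μ(𝔡_0, 𝔡_1, …, 𝔡_n) := B(𝔡_0)(𝔡_1, …, 𝔡_n) is an R-multilinear alternating (n+1)-form on 𝔇E, and moreover μ is a vector bundle form, i.e., μ ∈ Ω^{n+1}_𝔍. -/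
namespace Proof11

variable {R E : Type*} [CommRing R] [Algebra ℝ R]
  [AddCommGroup E] [Module ℝ E] [Module R E] [IsScalarTower ℝ R E]

lemma half_eq_zero {x : E} (h : x + x = 0) : x = 0 := by
  have h2 : (2 : ℝ) • x = 0 := by rw [two_smul]; exact h
  have h3 := congrArg (fun y => (2 : ℝ)⁻¹ • y) h2
  simpa [smul_smul, show (2:ℝ)⁻¹ * 2 = 1 by norm_num] using h3

lemma ofEnd_of_symbol_zero (d : VBDer R E) (h : d.X = 0) :
    ∃ Ψ : E →ₗ[R] E, VBDer.ofEnd Ψ = d := by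
  refine ⟨⟨⟨fun u => d.D u, fun u v => map_add _ _ _⟩, ?_⟩, ?_⟩
  · intro r u
    simp [d.leibniz, h]
  · refine VBDer.ext' (by ext u; rfl) h.symm

end Proof11

/-- Assume the symbol map is surjective. If `B : 𝔇E → Ω^{n+1}(𝔇E,E)` is an
`R`-linear map taking values in vector bundle forms and satisfying the skew-symmetry
`ι_{𝔡₁} B(𝔡₂) + ι_{𝔡₂} B(𝔡₁) = 0`, then `μ(𝔡₀, 𝔡₁, …) := B(𝔡₀)(𝔡₁, …)` is an `R`-multilinear
alternating `(n+2)`-form on `𝔇E`, and moreover a vector bundle form in `Ω^{n+2}_𝔍`. -/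
theorem graph_isotropic_gives_form (R E : Type*) [CommRing R] [Algebra ℝ R]
    [AddCommGroup E] [Module ℝ E] [Module R E] [IsScalarTower ℝ R E]
    (hsurj : SymbolSurj R E) (n : ℕ)
    (B : VBDer R E →ₗ[R] ((Fin (n + 1) → VBDer R E) → E))
    (hB : ∀ d : VBDer R E, IsVBForm (B d))
    (hskew : ∀ d₁ d₂ : VBDer R E, iotaF d₁ (B d₂) + iotaF d₂ (B d₁) = 0) :
    IsMultAlt R (fun w : Fin (n + 2) → VBDer R E => B (w 0) (Fin.tail w)) ∧
    IsVBForm (fun w : Fin (n + 2) → VBDer R E => B (w 0) (Fin.tail w)) := by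
  classical
  choose σ hσ using hsurj
  have skew : ∀ (d₁ d₂ : VBDer R E) (v : Fin n → VBDer R E),
      B d₂ (Fin.cons d₁ v) = - B d₁ (Fin.cons d₂ v) := by
    intro d₁ d₂ v
    have h := congrFun (hskew d₁ d₂) v
    simp only [Pi.add_apply, Pi.zero_apply, iotaF] at h
    exact eq_neg_of_add_eq_zero_left h
  have consSelf : ∀ (d : VBDer R E) (v : Fin n → VBDer R E), B d (Fin.cons d v) = 0 := by
    intro d v
    have h := congrFun (hskew d d) v
    simp only [Pi.add_apply, Pi.zero_apply, iotaF] at h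
    exact Proof11.half_eq_zero h
  choose A hA using fun d => (hB d).1
  have assoc : ∀ (d : VBDer R E) (Φ : E →ₗ[R] E) (v : Fin n → VBDer R E),
      B d (Fin.cons (VBDer.ofEnd Φ) v) = Φ ((hB d).2.choose fun i => (v i).X) :=
    fun d Φ v => (hB d).2.choose_spec.2 Φ v
  have vanish : ∀ (d c : VBDer R E), (∀ vv, B d (Fin.cons c vv) = 0) →
      ∀ (u : Fin (n+1) → VBDer R E) (k : Fin (n+1)), u k = c → B d u = 0 := by
    intro d c hc u k hk
    rcases eq_or_ne k 0 with rfl | hk0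
    · rw [← Fin.cons_self_tail u, hk]
      exact hc _
    · have hsw := (A d).map_swap (v := u) (Ne.symm hk0)
      rw [hA] at hsw
      have h0 : B d (u ∘ Equiv.swap 0 k) = 0 := by
        have hc0 : (u ∘ Equiv.swap 0 k) 0 = c := by
          simp [Function.comp, Equiv.swap_apply_left, hk]
        rw [← Fin.cons_self_tail (u ∘ Equiv.swap 0 k), hc0]
        exact hc _
      rw [h0] at hsw
      exact neg_eq_zero.mp hsw.symm
  have key : ∀ (Ψ Φ : E →ₗ[R] E) (w : Fin n → VBDer R E),
      B (VBDer.ofEnd Ψ) (Fin.cons (VBDer.ofEnd Φ) w)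
        = Φ (B (VBDer.ofEnd Ψ) (Fin.cons (VBDer.ofEnd LinearMap.id) w)) := by
    intro Ψ Φ w
    rw [assoc, assoc]
    simp
  have gskew : ∀ (Ψ Φ : E →ₗ[R] E) (w : Fin n → VBDer R E),
      Φ (B (VBDer.ofEnd Ψ) (Fin.cons (VBDer.ofEnd LinearMap.id) w))
        = - Ψ (B (VBDer.ofEnd Φ) (Fin.cons (VBDer.ofEnd LinearMap.id) w)) := by
    intro Ψ Φ w
    rw [← key Ψ Φ w, skew (VBDer.ofEnd Φ) (VBDer.ofEnd Ψ) w, key Φ Ψ w]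
  have gid : ∀ w : Fin n → VBDer R E,
      B (VBDer.ofEnd LinearMap.id) (Fin.cons (VBDer.ofEnd LinearMap.id) w) = 0 := by
    intro w
    have h := gskew LinearMap.id LinearMap.id w
    simp only [LinearMap.id_apply] at h
    exact Proof11.half_eq_zero (eq_neg_iff_add_eq_zero.mp h)
  have gzero : ∀ (Ψ : E →ₗ[R] E) (w : Fin n → VBDer R E),
      B (VBDer.ofEnd Ψ) (Fin.cons (VBDer.ofEnd LinearMap.id) w) = 0 := by
    intro Ψ w
    have h := gskew Ψ LinearMap.id w
    simp only [LinearMap.id_apply, gid w, map_zero, neg_zero] at h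
    exact h
  have K : ∀ (Ψ Φ : E →ₗ[R] E) (w : Fin n → VBDer R E),
      B (VBDer.ofEnd Ψ) (Fin.cons (VBDer.ofEnd Φ) w) = 0 := by
    intro Ψ Φ w
    rw [key, gzero, map_zero]
  have Hvan : ∀ (Ψ : E →ₗ[R] E) (u : Fin (n+1) → VBDer R E) (k : Fin (n+1)),
      u k = VBDer.ofEnd Ψ → B (VBDer.ofEnd LinearMap.id) u = 0 :=
    fun Ψ u k hk => vanish _ _ (fun vv => K LinearMap.id Ψ vv) u k hk
  have S : ∀ (v w : Fin (n+1) → VBDer R E), (∀ i, (v i).X = (w i).X) →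
      B (VBDer.ofEnd LinearMap.id) v = B (VBDer.ofEnd LinearMap.id) w := by
    have main : ∀ (m : ℕ) (v w : Fin (n+1) → VBDer R E), (∀ i, (v i).X = (w i).X) →
        (∀ i : Fin (n+1), m ≤ (i : ℕ) → v i = w i) →
        B (VBDer.ofEnd LinearMap.id) v = B (VBDer.ofEnd LinearMap.id) w := by
      intro m
      induction m with
      | zero =>
        intro v w _ hvw
        rw [funext fun i => hvw i (Nat.zero_le _)]
      | succ m ih =>
        intro v w hX hvw
        by_cases hm : m < n + 1
        · set im : Fin (n+1) := ⟨m, hm⟩ with him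
          obtain ⟨Ψ, hΨ⟩ : ∃ Ψ, VBDer.ofEnd Ψ = v im - w im := by
            apply Proof11.ofEnd_of_symbol_zero
            rw [sub_eq_add_neg]
            simp [hX im]
          have hdecomp : v im = w im + VBDer.ofEnd Ψ := by rw [hΨ]; abel
          have step : B (VBDer.ofEnd LinearMap.id) v
              = B (VBDer.ofEnd LinearMap.id) (Function.update v im (w im)) := by
            calc B (VBDer.ofEnd LinearMap.id) v
                = B (VBDer.ofEnd LinearMap.id) (Function.update v im (v im)) := by
                  rw [Function.update_eq_self]
              _ = B (VBDer.ofEnd LinearMap.id)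
                    (Function.update v im (w im + VBDer.ofEnd Ψ)) := by rw [← hdecomp]
              _ = B (VBDer.ofEnd LinearMap.id) (Function.update v im (w im))
                  + B (VBDer.ofEnd LinearMap.id) (Function.update v im (VBDer.ofEnd Ψ)) := by
                  rw [← hA, AlternatingMap.map_update_add, hA]
              _ = B (VBDer.ofEnd LinearMap.id) (Function.update v im (w im)) := by
                  rw [Hvan Ψ _ im (Function.update_self _ _ _), add_zero]
          rw [step]
          apply ih
          · intro i
            rcases eq_or_ne i im with rfl | h
            · simp
            · rw [Function.update_of_ne h]
              exact hX i
          · intro i hi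
            rcases eq_or_ne i im with rfl | h
            · simp
            · rw [Function.update_of_ne h]
              apply hvw
              have hne : (i : ℕ) ≠ m := fun hc => h (Fin.ext hc)
              omega
        · exact ih v w hX fun i hi => absurd hi (by have := i.isLt; omega)
    intro v w h
    exact main (n + 2) v w h fun i hi => absurd hi (by have := i.isLt; omega)
  set M : AlternatingMap R (VBDer R E) E (Fin (n + 2)) :=
    { toFun := fun w => B (w 0) (Fin.tail w)
      map_update_add' := by
        intro inst w i x y
        have hinst := Subsingleton.elim inst (instDecidableEqFin _); subst hinst
        induction i using Fin.cases with
        | zero =>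
          simp only [Function.update_self, Fin.tail_update_zero, map_add, Pi.add_apply]
        | succ j =>
          simp only [Function.update_of_ne (Fin.succ_ne_zero j).symm, Fin.tail_update_succ]
          rw [← hA, AlternatingMap.map_update_add]
      map_update_smul' := by
        intro inst w i c x
        have hinst := Subsingleton.elim inst (instDecidableEqFin _); subst hinst
        induction i using Fin.cases with
        | zero =>
          simp only [Function.update_self, Fin.tail_update_zero, map_smul, Pi.smul_apply]
        | succ j =>
          simp only [Function.update_of_ne (Fin.succ_ne_zero j).symm, Fin.tail_update_succ]
          rw [← hA, AlternatingMap.map_update_smul]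
      map_eq_zero_of_eq' := by
        intro w i j hv hij
        induction i using Fin.cases with
        | zero =>
          induction j using Fin.cases with
          | zero => exact absurd rfl hij
          | succ j' =>
            refine vanish (w 0) (w 0) (consSelf (w 0)) (Fin.tail w) j' ?_
            show w j'.succ = w 0
            exact hv.symm
        | succ i' =>
          induction j using Fin.cases with
          | zero =>
            refine vanish (w 0) (w 0) (consSelf (w 0)) (Fin.tail w) i' ?_
            show w i'.succ = w 0
            exact hv
          | succ j' =>
            show B (w 0) (Fin.tail w) = 0
            rw [← hA]
            refine (A (w 0)).map_eq_zero_of_eq (Fin.tail w) (i := i') (j := j') hv ?_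
            exact fun h => hij (by rw [h]) } with hM
  have comp_upd : ∀ (X : Fin (n+1) → Derivation ℝ R R) (i : Fin (n+1)) (a : Derivation ℝ R R),
      (fun j => σ (Function.update X i a j)) = Function.update (fun j => σ (X j)) i (σ a) := by
    intro X i a
    funext j
    rcases eq_or_ne j i with rfl | h
    · simp
    · simp [Function.update_of_ne h]
  set lam : AlternatingMap R (Derivation ℝ R R) E (Fin (n + 1)) :=
    { toFun := fun X => B (VBDer.ofEnd LinearMap.id) (fun i => σ (X i))
      map_update_add' := by
        intro inst X i x y
        have hinst := Subsingleton.elim inst (instDecidableEqFin _); subst hinst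
        rw [comp_upd, comp_upd, comp_upd,
          S (Function.update (fun j => σ (X j)) i (σ (x + y)))
            (Function.update (fun j => σ (X j)) i (σ x + σ y)) ?_,
          ← hA, AlternatingMap.map_update_add, hA]
        intro k
        rcases eq_or_ne k i with rfl | h
        · simp [hσ]
        · simp [Function.update_of_ne h]
      map_update_smul' := by
        intro inst X i c x
        have hinst := Subsingleton.elim inst (instDecidableEqFin _); subst hinst
        rw [comp_upd, comp_upd,
          S (Function.update (fun j => σ (X j)) i (σ (c • x)))
            (Function.update (fun j => σ (X j)) i (c • σ x)) ?_,
          ← hA, AlternatingMap.map_update_smul, hA]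
        intro k
        rcases eq_or_ne k i with rfl | h
        · simp [hσ]
        · simp [Function.update_of_ne h]
      map_eq_zero_of_eq' := by
        intro X i j hv hij
        show B (VBDer.ofEnd LinearMap.id) (fun k => σ (X k)) = 0
        rw [← hA]
        exact (A _).map_eq_zero_of_eq _ (i := i) (j := j) (by rw [hv]) hij } with hlam
  have phi_id : ∀ (Φ : E →ₗ[R] E) (v : Fin (n+1) → VBDer R E),
      B (VBDer.ofEnd Φ) v = Φ (B (VBDer.ofEnd LinearMap.id) v) := by
    intro Φ v
    have h1 : B (VBDer.ofEnd Φ) v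
        = - B (v 0) (Fin.cons (VBDer.ofEnd Φ) (Fin.tail v)) := by
      conv_lhs => rw [← Fin.cons_self_tail v]
      rw [skew]
    have h2 : B (VBDer.ofEnd LinearMap.id) v
        = - B (v 0) (Fin.cons (VBDer.ofEnd LinearMap.id) (Fin.tail v)) := by
      conv_lhs => rw [← Fin.cons_self_tail v]
      rw [skew]
    rw [h1, h2, assoc, assoc]
    simp
  have assoc_mu : ∀ (Φ : E →ₗ[R] E) (v : Fin (n+1) → VBDer R E),
      B (VBDer.ofEnd Φ) v = Φ (lam fun i => (v i).X) := by
    intro Φ v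
    rw [phi_id]
    congr 1
    show B (VBDer.ofEnd LinearMap.id) v
      = B (VBDer.ofEnd LinearMap.id) (fun i => σ ((v i).X))
    apply S
    intro i
    rw [hσ]
  refine ⟨⟨M, rfl⟩, ⟨M, rfl⟩, ⇑lam, ⟨lam, rfl⟩, ?_⟩
  intro Φ v
  simpa only [Fin.cons_zero, Fin.tail_cons] using assoc_mu Φ v
end

section
/- Let V be a finite-dimensional real vector space, L a one-dimensional real vector space, and ν : V^n → L an alternating multilinear map whose kernel D := {v ∈ V : ν(v, w_2, …, w_n) = 0 for all w_2, …, w_n ∈ V} is a subspace of codimension exactly n in V. Then there is a well-defined linear isomorphism A : Λ^n(V/D) → L determined by A((v_1 + D) ∧ ⋯ ∧ (v_n + D)) = ν(v_1, …, v_n) for all v_1, …, v_n ∈ V. -/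
/-- The kernel `{v ∈ V : ν(v, w₂, …, wₙ) = 0 ∀ wᵢ}` of an alternating multilinear map,
as a subspace. -/
def mcKer {V L : Type*} [AddCommGroup V] [Module ℝ V] [AddCommGroup L] [Module ℝ L]
    {n : ℕ} (ν : AlternatingMap ℝ V L (Fin (n + 1))) : Submodule ℝ V where
  carrier := {v | ∀ w : Fin n → V, ν (Fin.cons v w) = 0}
  add_mem' := by
    intro a b ha hb w
    have h := ν.toMultilinearMap.cons_add w a b
    simp only [AlternatingMap.coe_multilinearMap] at h
    rw [h, ha w, hb w, add_zero]
  zero_mem' := by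
    intro w
    exact ν.toMultilinearMap.map_coord_zero 0 (by simp)
  smul_mem' := by
    intro c a ha w
    have h := ν.toMultilinearMap.cons_smul w c a
    simp only [AlternatingMap.coe_multilinearMap] at h
    rw [h, ha w, smul_zero]

/-- The element `w₁ ∧ ⋯ ∧ wₙ` of the `n`-th exterior power `⋀[ℝ]^n Q`. -/
noncomputable def wedgeClass {Q : Type*} [AddCommGroup Q] [Module ℝ Q] (n : ℕ)
    (w : Fin n → Q) : ⋀[ℝ]^n Q :=
  ⟨ExteriorAlgebra.ιMulti ℝ n w, ExteriorAlgebra.ιMulti_range ℝ n (Set.mem_range_self w)⟩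

section Aux

open Module

variable {Q : Type*} [AddCommGroup Q] [Module ℝ Q]

/-- `wedgeClass` as an alternating map. -/
noncomputable def wedgeAlt (n : ℕ) : Q [⋀^Fin n]→ₗ[ℝ] (⋀[ℝ]^n Q) :=
  (ExteriorAlgebra.ιMulti ℝ n).codRestrict (⋀[ℝ]^n Q)
    (fun w => ExteriorAlgebra.ιMulti_range ℝ n (Set.mem_range_self w))

lemma wedgeAlt_apply (n : ℕ) (w : Fin n → Q) : wedgeAlt n w = wedgeClass n w := rfl

lemma wedge_span (n : ℕ) :
    Submodule.span ℝ (Set.range (wedgeClass (Q := Q) n)) = ⊤ := by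
  apply Submodule.map_injective_of_injective ((⋀[ℝ]^n Q).injective_subtype)
  rw [Submodule.map_span, Submodule.map_top, Submodule.range_subtype]
  have : (⋀[ℝ]^n Q).subtype '' Set.range (wedgeClass (Q := Q) n)
      = Set.range (ExteriorAlgebra.ιMulti ℝ n (M := Q)) := by
    ext x
    constructor
    · rintro ⟨_, ⟨w, rfl⟩, rfl⟩; exact ⟨w, rfl⟩
    · rintro ⟨w, rfl⟩; exact ⟨wedgeClass n w, ⟨w, rfl⟩, rfl⟩
  rw [this, ExteriorAlgebra.ιMulti_span_fixedDegree]

lemma wedge_span_basis {n : ℕ} (b : Basis (Fin n) ℝ Q) :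
    Submodule.span ℝ {wedgeClass n ⇑b} = ⊤ := by
  rw [← top_le_iff, ← wedge_span n, Submodule.span_le]
  rintro _ ⟨w, rfl⟩
  have hw : w = fun i => ∑ j, b.repr (w i) j • b j := by
    funext i; exact (b.sum_repr (w i)).symm
  have e1 : wedgeClass n w
      = ∑ r : Fin n → Fin n, (wedgeAlt (Q := Q) n).toMultilinearMap
          (fun i => b.repr (w i) (r i) • b (r i)) := by
    rw [show wedgeClass n w
        = (wedgeAlt (Q := Q) n).toMultilinearMap (fun i => ∑ j, b.repr (w i) j • b j) by
      rw [← hw]; rfl]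
    exact MultilinearMap.map_sum _ _
  rw [e1]
  refine Submodule.sum_mem _ fun r _ => ?_
  have hs : (wedgeAlt (Q := Q) n).toMultilinearMap (fun i => b.repr (w i) (r i) • b (r i))
      = (∏ i, b.repr (w i) (r i)) • wedgeAlt n (fun i => b (r i)) :=
    MultilinearMap.map_smul_univ _ _ _
  rw [hs]
  refine Submodule.smul_mem _ _ ?_
  by_cases hr : Function.Injective r
  · set σ : Equiv.Perm (Fin n) := Equiv.ofBijective r (Finite.injective_iff_bijective.mp hr)
    have hc : (fun i => b (r i)) = ⇑b ∘ σ := rfl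
    rw [hc, (wedgeAlt n).map_perm ⇑b σ, Units.smul_def, ← Int.cast_smul_eq_zsmul ℝ]
    exact Submodule.smul_mem _ _ (Submodule.mem_span_singleton_self _)
  · obtain ⟨i, j, hij, hne⟩ := Function.not_injective_iff.mp hr
    rw [(wedgeAlt n).map_eq_zero_of_eq (fun k => b (r k)) (i := i) (j := j) (congrArg b hij) hne]
    exact Submodule.zero_mem _

variable {V L : Type*} [AddCommGroup V] [Module ℝ V] [AddCommGroup L] [Module ℝ L]
  {n : ℕ} (ν : AlternatingMap ℝ V L (Fin (n + 1)))

lemma mcKer_slot {d : V} (hd : d ∈ mcKer ν) (v : Fin (n + 1) → V) (i : Fin (n + 1))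
    (hv : v i = d) : ν v = 0 := by
  have h0 : ∀ w : Fin (n + 1) → V, w 0 = d → ν w = 0 := by
    intro w hw
    rw [← Fin.cons_self_tail w, hw]
    exact hd _
  have hp := ν.map_perm v (Equiv.swap 0 i)
  have h1 : ν (v ∘ Equiv.swap 0 i) = 0 := h0 _ (by simp [hv])
  rw [h1] at hp
  rcases Int.units_eq_one_or (Equiv.Perm.sign (Equiv.swap 0 i)) with hs | hs <;>
    rw [hs] at hp <;> simpa [Units.smul_def] using hp.symm

lemma mcKer_congr {v v' : Fin (n + 1) → V}
    (h : ∀ i, (Submodule.Quotient.mk (v i) : V ⧸ mcKer ν) = Submodule.Quotient.mk (v' i)) :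
    ν v = ν v' := by
  classical
  have key : ∀ s : Finset (Fin (n + 1)),
      ν (fun i => if i ∈ s then v' i else v i) = ν v := by
    intro s
    induction s using Finset.induction with
    | empty => simp
    | @insert a s ha ih =>
      have hupd : (fun i => if i ∈ insert a s then v' i else v i)
          = Function.update (fun i => if i ∈ s then v' i else v i) a (v' a) := by
        funext i
        rcases eq_or_ne i a with rfl | hia
        · simp [ha]
        · simp [Function.update_of_ne hia, Finset.mem_insert, hia]
      have hva : v' a = v a + (v' a - v a) := by abel
      rw [hupd, hva, AlternatingMap.map_update_add]
      have hmem : v' a - v a ∈ mcKer ν := by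
        rw [← Submodule.Quotient.eq]
        exact (h a).symm
      rw [mcKer_slot ν hmem _ a (Function.update_self a _ _)]
      have hself : Function.update (fun i => if i ∈ s then v' i else v i) a (v a)
          = fun i => if i ∈ s then v' i else v i := by
        funext i
        rcases eq_or_ne i a with rfl | hia
        · simp [ha]
        · simp [Function.update_of_ne hia]
      rw [hself, ih, add_zero]
  have := key Finset.univ
  simpa using this.symm

end Aux

/-- If `ν : V^{n+1} → L` is alternating multilinear with values in a line
`L` and its kernel `D = mcKer ν` has codimension exactly `n+1` in `V`, then there is a
well-defined linear isomorphism `A : Λ^{n+1}(V/D) → L` determined by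
`A((v₁+D) ∧ ⋯ ∧ (v_{n+1}+D)) = ν(v₁,…,v_{n+1})`. -/
theorem multicontact_iso (V L : Type) [AddCommGroup V] [Module ℝ V] [FiniteDimensional ℝ V]
    [AddCommGroup L] [Module ℝ L] (hL : Module.finrank ℝ L = 1)
    (n : ℕ) (ν : AlternatingMap ℝ V L (Fin (n + 1)))
    (hν : Module.finrank ℝ (V ⧸ mcKer ν) = n + 1) :
    (∃! A : (⋀[ℝ]^(n+1) (V ⧸ mcKer ν)) →ₗ[ℝ] L,
      ∀ v : Fin (n + 1) → V,
        A (wedgeClass (n + 1) fun i => Submodule.Quotient.mk (v i)) = ν v) ∧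
    (∀ A : (⋀[ℝ]^(n+1) (V ⧸ mcKer ν)) →ₗ[ℝ] L,
      (∀ v : Fin (n + 1) → V,
        A (wedgeClass (n + 1) fun i => Submodule.Quotient.mk (v i)) = ν v) →
      Function.Bijective A) := by
  classical
  obtain ⟨f, hf⟩ := (mcKer ν).mkQ.exists_rightInverse_of_surjective
    (by rw [Submodule.range_mkQ])
  set ν' : (V ⧸ mcKer ν) [⋀^Fin (n + 1)]→ₗ[ℝ] L := ν.compLinearMap f with hν'def
  have hfx : ∀ x : V ⧸ mcKer ν, Submodule.Quotient.mk (f x) = x := by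
    intro x
    have := congrArg (fun g => g x) hf
    simpa [Submodule.mkQ_apply] using this
  have hν'mk : ∀ v : Fin (n + 1) → V,
      ν' (fun i => Submodule.Quotient.mk (v i)) = ν v := by
    intro v
    rw [hν'def]
    simp only [AlternatingMap.compLinearMap_apply]
    exact mcKer_congr ν (fun i => hfx _)
  set fam : ∀ i : ℕ, (V ⧸ mcKer ν) [⋀^Fin i]→ₗ[ℝ] L :=
    Function.update (fun _ => 0) (n + 1) ν' with hfam
  set A₀ : (⋀[ℝ]^(n+1) (V ⧸ mcKer ν)) →ₗ[ℝ] L :=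
    (ExteriorAlgebra.liftAlternating fam).comp (Submodule.subtype _) with hA₀def
  have hA₀w : ∀ w : Fin (n + 1) → V ⧸ mcKer ν, A₀ (wedgeClass (n + 1) w) = ν' w := by
    intro w
    show ExteriorAlgebra.liftAlternating fam (ExteriorAlgebra.ιMulti ℝ (n + 1) w) = ν' w
    rw [ExteriorAlgebra.liftAlternating_apply_ιMulti]
    simp [hfam]
  have hA₀ν : ∀ v : Fin (n + 1) → V,
      A₀ (wedgeClass (n + 1) fun i => Submodule.Quotient.mk (v i)) = ν v := fun v => by
    rw [hA₀w, hν'mk]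
  have ext_wedge : ∀ A B : (⋀[ℝ]^(n+1) (V ⧸ mcKer ν)) →ₗ[ℝ] L,
      (∀ v : Fin (n + 1) → V,
        A (wedgeClass (n + 1) fun i => Submodule.Quotient.mk (v i)) = ν v) →
      (∀ v : Fin (n + 1) → V,
        B (wedgeClass (n + 1) fun i => Submodule.Quotient.mk (v i)) = ν v) → A = B := by
    intro A B hAe hBe
    apply LinearMap.ext_on (wedge_span (n + 1))
    rintro _ ⟨w, rfl⟩
    obtain ⟨v, hv⟩ : ∃ v : Fin (n + 1) → V,
        (fun i => (Submodule.Quotient.mk (v i) : V ⧸ mcKer ν)) = w := by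
      choose v hv using fun i => Submodule.Quotient.mk_surjective _ (w i)
      exact ⟨v, funext hv⟩
    rw [← hv, hAe, hBe]
  refine ⟨⟨A₀, hA₀ν, fun A hA => ext_wedge A A₀ hA hA₀ν⟩, ?_⟩
  intro A hA
  haveI : FiniteDimensional ℝ L :=
    Module.finite_of_finrank_pos (by rw [hL]; norm_num)
  obtain ⟨v₀, hv₀⟩ : ∃ v₀ : Fin (n + 1) → V, ν v₀ ≠ 0 := by
    by_contra hcon
    push_neg at hcon
    have hDtop : mcKer ν = ⊤ := by
      rw [eq_top_iff]
      intro u _ w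
      exact hcon _
    have h1 := Submodule.finrank_quotient_add_finrank (mcKer ν)
    rw [hν, hDtop, finrank_top] at h1
    omega
  have hq : LinearIndependent ℝ
      (fun i => (Submodule.Quotient.mk (v₀ i) : V ⧸ mcKer ν)) := by
    by_contra hcon
    exact hv₀ (by rw [← hν'mk v₀]; exact ν'.map_linearDependent _ hcon)
  have hcard : Fintype.card (Fin (n + 1)) = Module.finrank ℝ (V ⧸ mcKer ν) := by
    simp [hν]
  let b : Module.Basis (Fin (n + 1)) ℝ (V ⧸ mcKer ν) :=
    basisOfLinearIndependentOfCardEqFinrank hq hcard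
  have hb : ⇑b = fun i => (Submodule.Quotient.mk (v₀ i) : V ⧸ mcKer ν) :=
    coe_basisOfLinearIndependentOfCardEqFinrank hq hcard
  have hspan : Submodule.span ℝ
      {wedgeClass (n + 1) fun i => (Submodule.Quotient.mk (v₀ i) : V ⧸ mcKer ν)} = ⊤ := by
    rw [← hb]
    exact wedge_span_basis b
  have hAw : A (wedgeClass (n + 1) fun i => Submodule.Quotient.mk (v₀ i)) = ν v₀ := hA v₀
  constructor
  · rw [injective_iff_map_eq_zero]
    intro x hx
    have hx' : x ∈ Submodule.span ℝ
        {wedgeClass (n + 1) fun i => (Submodule.Quotient.mk (v₀ i) : V ⧸ mcKer ν)} :=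
      hspan ▸ Submodule.mem_top
    obtain ⟨c, rfl⟩ := Submodule.mem_span_singleton.mp hx'
    rw [map_smul, hAw] at hx
    rcases smul_eq_zero.mp hx with hc | h0
    · rw [hc, zero_smul]
    · exact absurd h0 hv₀
  · intro ℓ
    have hsL : Submodule.span ℝ {ν v₀} = ⊤ :=
      Submodule.eq_top_of_finrank_eq (by rw [finrank_span_singleton hv₀, hL])
    have hl : ℓ ∈ Submodule.span ℝ {ν v₀} := hsL ▸ Submodule.mem_top
    obtain ⟨c, rfl⟩ := Submodule.mem_span_singleton.mp hl
    exact ⟨c • wedgeClass (n + 1) fun i => Submodule.Quotient.mk (v₀ i),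
      by rw [map_smul, hAw]⟩
end

section
/- Assume the symbol map is surjective. (a) For every E-valued R-multilinear alternating (k−1)-form λ on Der(R) (k ≥ 1), the form 𝕕(𝕛*λ) is a vector bundle form in Ω^k_𝔍 whose (unique) associated map is λ itself: λ_{𝕕(𝕛*λ)} = λ. (b) Every vector bundle form μ ∈ Ω^k_𝔍 decomposes as μ = 𝕛*(λ_{𝕕μ}) + 𝕕(𝕛*λ_μ), where λ_μ is the associated map of μ and λ_{𝕕μ} is the associated map of 𝕕μ. -/
section Basics

variable {R E : Type*} [CommRing R] [Algebra ℝ R]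
  [AddCommGroup E] [Module ℝ E] [Module R E] [IsScalarTower ℝ R E]

namespace VBDer

lemma D_smul (d : VBDer R E) (r : R) (u : E) :
    d.D (r • u) = d.X r • u + r • d.D u := d.leibniz r u

@[simp] lemma bracket_X (a b : VBDer R E) : (bracket a b).X = ⁅a.X, b.X⁆ := rfl
@[simp] lemma bracket_D (a b : VBDer R E) : (bracket a b).D = a.D ∘ₗ b.D - b.D ∘ₗ a.D := rfl
@[simp] lemma ofEnd_X (Φ : E →ₗ[R] E) : (ofEnd Φ).X = 0 := rfl
@[simp] lemma ofEnd_D_apply (Φ : E →ₗ[R] E) (u : E) : (ofEnd Φ).D u = Φ u := rfl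

/-- The `R`-linear endomorphism underlying a derivation with zero symbol. -/
def toLin (d : VBDer R E) (h : d.X = 0) : E →ₗ[R] E where
  toFun := d.D
  map_add' := by simp
  map_smul' r u := by
    have := d.leibniz r u
    rw [h] at this
    simpa using this

lemma eq_ofEnd (d : VBDer R E) (h : d.X = 0) : d = ofEnd (d.toLin h) := by
  refine ext' ?_ ?_
  · rfl
  · rw [h]; rfl

lemma bracket_add_left (a b c : VBDer R E) :
    bracket (a + b) c = bracket a c + bracket b c := by
  refine ext' ?_ ?_
  · ext u; simp [bracket]; abel
  · simp [bracket]

lemma bracket_add_right (a b c : VBDer R E) :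
    bracket a (b + c) = bracket a b + bracket a c := by
  refine ext' ?_ ?_
  · ext u; simp [bracket]; abel
  · simp [bracket]

end VBDer

lemma Derivation.smul_lie' (r : R) (X Y : Derivation ℝ R R) :
    ⁅r • X, Y⁆ = r • ⁅X, Y⁆ - Y r • X := by
  ext s
  simp only [Derivation.commutator_apply, Derivation.coe_smul, Pi.smul_apply, smul_eq_mul,
    Derivation.sub_apply, map_mul, Derivation.leibniz]
  ring

lemma Derivation.lie_smul' (r : R) (X Y : Derivation ℝ R R) :
    ⁅X, r • Y⁆ = r • ⁅X, Y⁆ + X r • Y := by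
  ext s
  simp only [Derivation.commutator_apply, Derivation.coe_smul, Pi.smul_apply, smul_eq_mul,
    Derivation.add_apply, map_mul, Derivation.leibniz]
  ring

end Basics
section Move

lemma Fin.cycleRange_val' {m : ℕ} (t x : Fin (m + 1)) :
    ((t.cycleRange x : Fin (m + 1)) : ℕ) =
      if (x : ℕ) < (t : ℕ) then (x : ℕ) + 1 else if (x : ℕ) = (t : ℕ) then 0 else (x : ℕ) := by
  rcases lt_trichotomy x t with h | h | h
  · rw [Fin.coe_cycleRange_of_lt h, if_pos (by exact h)]
  · rw [Fin.cycleRange_of_eq h, if_neg (by omega), if_pos (by exact congrArg Fin.val h)]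
    rfl
  · rw [Fin.cycleRange_of_gt h, if_neg (by omega), if_neg (by omega)]

variable {R' M N : Type*} [CommRing R'] [AddCommGroup M] [Module R' M]
  [AddCommGroup N] [Module R' N]

lemma AlternatingMap.move_front {m : ℕ} (f : M [⋀^Fin (m + 1)]→ₗ[R'] N)
    (T W : Fin (m + 1) → M) (t : Fin (m + 1))
    (h : ∀ x : Fin (m + 1), W x = T (t.cycleRange x)) :
    f W = ((-1 : ℤ) ^ (t : ℕ)) • f T := by
  have hW : W = T ∘ t.cycleRange := funext h
  rw [hW, f.map_perm T t.cycleRange, Fin.sign_cycleRange]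
  rcases Int.even_or_odd ((t : ℕ) : ℤ) with he | ho
  · have he' : Even (t : ℕ) := by rwa [Int.even_coe_nat] at he
    rw [he'.neg_one_pow, he'.neg_one_pow, one_smul, one_smul]
  · have ho' : Odd (t : ℕ) := by rwa [Int.odd_coe_nat] at ho
    rw [ho'.neg_one_pow, ho'.neg_one_pow, Units.neg_smul, one_smul, neg_smul, one_smul]

end Move
section GenAlt

open Function

variable {M N : Type*} [AddCommGroup M] [AddCommGroup N]
variable {n : ℕ} {F : (Fin n → M) → N}

lemma gen_adj_antisym
    (hadd : ∀ (v : Fin n → M) (i : Fin n) (x y : M),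
      F (update v i (x + y)) = F (update v i x) + F (update v i y))
    (hadj : ∀ (v : Fin n → M) (i j : Fin n), (i : ℕ) + 1 = (j : ℕ) → v i = v j → F v = 0)
    (v : Fin n → M) (i j : Fin n) (h : (i : ℕ) + 1 = (j : ℕ)) :
    F (update (update v i (v j)) j (v i)) = - F v := by
  have hij : i ≠ j := by intro he; rw [he] at h; omega
  
  
  have h0 : F (update (update v i (v i + v j)) j (v i + v j)) = 0 := by
    refine hadj _ i j h ?_
    rw [update_apply, update_apply, if_pos rfl, if_neg hij, update_apply, if_pos rfl]
  rw [hadd _ j (v i) (v j),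
    show update (update v i (v i + v j)) j (v i) = update (update v j (v i)) i (v i + v j) from
      update_comm hij _ _ _,
    show update (update v i (v i + v j)) j (v j) = update (update v j (v j)) i (v i + v j) from
      update_comm hij _ _ _,
    hadd _ i (v i) (v j), hadd _ i (v i) (v j)] at h0
  have t1 : F (update (update v j (v i)) i (v i)) = 0 := by
    refine hadj _ i j h ?_
    rw [update_apply, if_pos rfl, update_apply, if_neg hij.symm, update_apply, if_pos rfl]
  have t4 : F (update (update v j (v j)) i (v j)) = 0 := by
    refine hadj _ i j h ?_
    rw [update_apply, if_pos rfl, update_apply, if_neg hij.symm, update_apply, if_pos rfl]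
  have t3 : F (update (update v j (v j)) i (v i)) = F v := by
    rw [update_eq_self, update_eq_self]
  rw [t1, t4, t3, zero_add, add_zero] at h0
  rw [show update (update v i (v j)) j (v i) = update (update v j (v i)) i (v j) from update_comm hij _ _ _]
  exact eq_neg_of_add_eq_zero_left h0

lemma gen_eq_zero_of_eq
    (hadd : ∀ (v : Fin n → M) (i : Fin n) (x y : M),
      F (update v i (x + y)) = F (update v i x) + F (update v i y))
    (hadj : ∀ (v : Fin n → M) (i j : Fin n), (i : ℕ) + 1 = (j : ℕ) → v i = v j → F v = 0)
    (v : Fin n → M) (i j : Fin n) (hlt : (i : ℕ) < (j : ℕ)) (hv : v i = v j) :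
    F v = 0 := by
  obtain ⟨m, hm⟩ : ∃ m, (j : ℕ) = (i : ℕ) + 1 + m := ⟨(j : ℕ) - (i : ℕ) - 1, by omega⟩
  clear hlt
  induction m generalizing v i j with
  | zero => exact hadj v i j (by omega) hv
  | succ m ih =>
    have hjn : (j : ℕ) < n := j.isLt
    have hi1 : (i : ℕ) + 1 < (j : ℕ) := by omega
    set j1 : Fin n := ⟨(j : ℕ) - 1, by omega⟩ with hj1
    have hj1j : (j1 : ℕ) + 1 = (j : ℕ) := by simp only [hj1]; omega
    have hij1 : i ≠ j1 := by
      intro he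
      have : (i : ℕ) = (j : ℕ) - 1 := by rw [he]
      omega
    have hj1ne : j1 ≠ j := by intro he; rw [← he] at hj1j; omega
    have hine : i ≠ j := by intro he; rw [he] at hm; omega
    set w := update (update v j1 (v j)) j (v j1) with hw
    have hFw : F w = - F v := gen_adj_antisym hadd hadj v j1 j hj1j
    have hwi : w i = v i := by
      rw [hw, update_apply, if_neg hine, update_apply, if_neg hij1]
    have hwj1 : w j1 = v j := by
      rw [hw, update_apply, if_neg hj1ne, update_apply, if_pos rfl]
    have h0 : F w = 0 := ih w i j1 (by rw [hwi, hwj1]; exact hv) (by simp only [hj1]; omega)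
    rw [h0] at hFw
    exact neg_eq_zero.mp hFw.symm

end GenAlt
section Idx

variable {R E : Type*} [CommRing R] [Algebra ℝ R]
  [AddCommGroup E] [Module ℝ E] [Module R E] [IsScalarTower ℝ R E]

lemma succAbove_val {k : ℕ} (i : Fin (k + 1)) (t : Fin k) :
    ((i.succAbove t : Fin (k + 1)) : ℕ) =
      if (t : ℕ) < (i : ℕ) then (t : ℕ) else (t : ℕ) + 1 := by
  rw [Fin.succAbove]
  split_ifs with h1 h2 h2
  · rfl
  · exact absurd (by simpa [Fin.lt_def] using h1) h2
  · exact absurd (by simpa [Fin.lt_def] using h2) h1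
  · rfl

lemma pairTuple_apply_zero {k : ℕ} (v : Fin (k + 1) → VBDer R E) (i j : Fin (k + 1))
    (l : Fin k) (h : (l : ℕ) = 0) :
    pairTuple v i j l = VBDer.bracket (v i) (v j) := by
  unfold pairTuple; rw [if_pos h]

lemma pairTuple_apply_ne {k : ℕ} (v : Fin (k + 1) → VBDer R E) (i j : Fin (k + 1))
    (l : Fin k) (h : (l : ℕ) ≠ 0) :
    pairTuple v i j l = v (dIdx i j l) := by
  unfold pairTuple; rw [if_neg h]

lemma dIdx_preimage {k : ℕ} (i j p : Fin (k + 1)) (hij : (i : ℕ) < (j : ℕ))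
    (hpi : (p : ℕ) ≠ (i : ℕ)) (hpj : (p : ℕ) ≠ (j : ℕ)) :
    ∃ q : Fin k, (q : ℕ) ≠ 0 ∧ dIdx i j q = p ∧
      (∀ t : Fin k, (t : ℕ) ≠ 0 → t ≠ q → dIdx i j t ≠ p) := by
  have hk : (j : ℕ) ≤ k := by omega
  have hk1 : 1 ≤ k := by omega
  refine ⟨⟨if (p : ℕ) < (i : ℕ) then (p : ℕ) + 1 else if (p : ℕ) < (j : ℕ)
    then (p : ℕ) else (p : ℕ) - 1, by have := p.isLt; split_ifs <;> omega⟩, ?_, ?_, ?_⟩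
  · simp only
    split_ifs <;> omega
  · apply Fin.ext
    rw [dIdx_val]
    simp only
    split_ifs <;> omega
  · intro t ht htq hc
    apply htq
    apply Fin.ext
    have h1 := dIdx_val i j t
    have h2 : ((dIdx i j t : Fin (k+1)) : ℕ) = (p : ℕ) := congrArg Fin.val hc
    simp only
    rw [h1] at h2
    have := t.isLt
    split_ifs at h2 ⊢ <;> omega

lemma dIdx_avoid {k : ℕ} (i j : Fin (k + 1)) (hij : (i : ℕ) < (j : ℕ)) (t : Fin k)
    (ht : (t : ℕ) ≠ 0) : (dIdx i j t : ℕ) ≠ (i : ℕ) ∧ (dIdx i j t : ℕ) ≠ (j : ℕ) := by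
  have h1 := dIdx_val i j t
  have := t.isLt
  constructor <;> (rw [h1]; split_ifs <;> omega)

end Idx
set_option linter.unusedSectionVars false

section Main

open Function

variable {R E : Type*} [CommRing R] [Algebra ℝ R]
  [AddCommGroup E] [Module ℝ E] [Module R E] [IsScalarTower ℝ R E]
variable {k : ℕ}

namespace DFAux

lemma sgn_mul (a b : ℕ) (u : E) :
    ((-1 : ℤ) ^ a) • ((-1 : ℤ) ^ b) • u = ((-1 : ℤ) ^ (a + b)) • u := by
  rw [smul_smul, ← pow_add]

lemma sgn_congr {a b : ℕ} (h : a % 2 = b % 2) (u : E) :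
    ((-1 : ℤ) ^ a) • u = ((-1 : ℤ) ^ b) • u := by
  have : ((-1 : ℤ) ^ a) = (-1 : ℤ) ^ b := by
    rcases Nat.even_or_odd a with ha | ha
    · have hb : Even b := by rw [Nat.even_iff] at ha ⊢; omega
      rw [ha.neg_one_pow, hb.neg_one_pow]
    · have hb : Odd b := by rw [Nat.odd_iff] at ha ⊢; omega
      rw [ha.neg_one_pow, hb.neg_one_pow]
  rw [this]

lemma sgn_flip {t : ℕ} {x y : E} (h : x = ((-1 : ℤ) ^ t) • y) :
    y = ((-1 : ℤ) ^ t) • x := by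
  rw [h, sgn_mul]
  have : Even (t + t) := ⟨t, rfl⟩
  rw [this.neg_one_pow, one_smul]

lemma sgn_neg (a : ℕ) (u : E) : ((-1 : ℤ) ^ (a + 1)) • u = -(((-1 : ℤ) ^ a) • u) := by
  rw [pow_succ, mul_comm, ← smul_smul]
  norm_num

/-- The symbols of the tuple with the `i`-th entry removed. -/
def Ws (v : Fin (k + 1) → VBDer R E) (i : Fin (k + 1)) : Fin k → Derivation ℝ R R :=
  fun t => (v (i.succAbove t)).X

/-- The symbols of `pairTuple v i j`. -/
def Pt (v : Fin (k + 1) → VBDer R E) (i j : Fin (k + 1)) : Fin k → Derivation ℝ R R :=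
  fun t => (pairTuple v i j t).X

variable (lm : (Derivation ℝ R R) [⋀^Fin k]→ₗ[R] E)

def dS1 (v : Fin (k + 1) → VBDer R E) : E :=
  ∑ i : Fin (k + 1), ((-1 : ℤ) ^ (i : ℕ)) • (v i).D (lm (Ws v i))

def dS2 (v : Fin (k + 1) → VBDer R E) : E :=
  ∑ i : Fin (k + 1), ∑ j : Fin (k + 1),
    if i < j then ((-1 : ℤ) ^ ((i : ℕ) + (j : ℕ))) • lm (Pt v i j) else 0

lemma dF_jStar_eq (lam : (Fin k → Derivation ℝ R R) → E) (hlam : ⇑lm = lam)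
    (v : Fin (k + 1) → VBDer R E) :
    dF (jStar lam) v = dS1 lm v + dS2 lm v := by
  subst hlam
  unfold dF jStar dS1 dS2 Ws Pt
  rfl

/-! ### Tuple rewriting lemmas -/

lemma Ws_update_self (v : Fin (k + 1) → VBDer R E) (p : Fin (k + 1)) (x : VBDer R E) :
    Ws (update v p x) p = Ws v p := by
  funext t
  show (update v p x (p.succAbove t)).X = (v (p.succAbove t)).X
  rw [update_of_ne (Fin.succAbove_ne p t)]

lemma Ws_update_eq (v : Fin (k + 1) → VBDer R E) (p i : Fin (k + 1)) (x : VBDer R E)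
    (q : Fin k) (hq : i.succAbove q = p) :
    Ws (update v p x) i = update (Ws v i) q x.X := by
  funext t
  by_cases ht : t = q
  · subst ht
    rw [update_self]
    show (update v p x (i.succAbove t)).X = x.X
    rw [hq, update_self]
  · have hne : i.succAbove t ≠ p := by
      rw [← hq]; exact fun hc => ht (Fin.succAbove_right_injective hc)
    rw [update_of_ne ht]
    show (update v p x (i.succAbove t)).X = (v (i.succAbove t)).X
    rw [update_of_ne hne]

lemma Ws_val (v : Fin (k + 1) → VBDer R E) (i : Fin (k + 1)) (q : Fin k) :
    Ws v i q = (v (i.succAbove q)).X := rfl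

lemma Pt_update_of_ne (v : Fin (k + 1) → VBDer R E) {i j p : Fin (k + 1)} (q : Fin k)
    (hq0 : (q : ℕ) ≠ 0) (hqp : dIdx i j q = p)
    (huniq : ∀ t : Fin k, (t : ℕ) ≠ 0 → t ≠ q → dIdx i j t ≠ p)
    (hpi : p ≠ i) (hpj : p ≠ j) (x : VBDer R E) :
    Pt (update v p x) i j = update (Pt v i j) q x.X := by
  funext t
  by_cases ht : t = q
  · subst ht
    rw [update_self]
    show (pairTuple (update v p x) i j t).X = x.X
    rw [pairTuple_apply_ne _ _ _ _ hq0, hqp, update_self]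
  · rw [update_of_ne ht]
    show (pairTuple (update v p x) i j t).X = (pairTuple v i j t).X
    by_cases ht0 : (t : ℕ) = 0
    · rw [pairTuple_apply_zero _ _ _ _ ht0, pairTuple_apply_zero _ _ _ _ ht0,
        update_of_ne hpi.symm, update_of_ne hpj.symm]
    · rw [pairTuple_apply_ne _ _ _ _ ht0, pairTuple_apply_ne _ _ _ _ ht0,
        update_of_ne (huniq t ht0 ht)]

lemma Pt_val_preim (v : Fin (k + 1) → VBDer R E) {i j p : Fin (k + 1)} (q : Fin k)
    (hq0 : (q : ℕ) ≠ 0) (hqp : dIdx i j q = p) : Pt v i j q = (v p).X := by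
  show (pairTuple v i j q).X = (v p).X
  rw [pairTuple_apply_ne _ _ _ _ hq0, hqp]

lemma Pt_update_left (v : Fin (k + 1) → VBDer R E) {i j : Fin (k + 1)}
    (hij : (i : ℕ) < (j : ℕ)) (z : Fin k) (hz : (z : ℕ) = 0) (x : VBDer R E) :
    Pt (update v i x) i j = update (Pt v i j) z ⁅x.X, (v j).X⁆ := by
  have hijne : i ≠ j := fun h => by rw [h] at hij; omega
  funext t
  by_cases ht : t = z
  · subst ht
    rw [update_self]
    show (pairTuple (update v i x) i j t).X = ⁅x.X, (v j).X⁆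
    rw [pairTuple_apply_zero _ _ _ _ hz, VBDer.bracket_X, update_self, update_of_ne hijne.symm]
  · have ht0 : (t : ℕ) ≠ 0 := fun h => ht (Fin.ext (h.trans hz.symm))
    rw [update_of_ne ht]
    show (pairTuple (update v i x) i j t).X = (pairTuple v i j t).X
    rw [pairTuple_apply_ne _ _ _ _ ht0, pairTuple_apply_ne _ _ _ _ ht0]
    have := dIdx_avoid i j hij t ht0
    rw [update_of_ne (fun hc => this.1 (congrArg Fin.val hc))]

lemma Pt_update_right (v : Fin (k + 1) → VBDer R E) {i j : Fin (k + 1)}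
    (hij : (i : ℕ) < (j : ℕ)) (z : Fin k) (hz : (z : ℕ) = 0) (x : VBDer R E) :
    Pt (update v j x) i j = update (Pt v i j) z ⁅(v i).X, x.X⁆ := by
  have hijne : i ≠ j := fun h => by rw [h] at hij; omega
  funext t
  by_cases ht : t = z
  · subst ht
    rw [update_self]
    show (pairTuple (update v j x) i j t).X = ⁅(v i).X, x.X⁆
    rw [pairTuple_apply_zero _ _ _ _ hz, VBDer.bracket_X, update_self, update_of_ne hijne]
  · have ht0 : (t : ℕ) ≠ 0 := fun h => ht (Fin.ext (h.trans hz.symm))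
    rw [update_of_ne ht]
    show (pairTuple (update v j x) i j t).X = (pairTuple v i j t).X
    rw [pairTuple_apply_ne _ _ _ _ ht0, pairTuple_apply_ne _ _ _ _ ht0]
    have := dIdx_avoid i j hij t ht0
    rw [update_of_ne (fun hc => this.2 (congrArg Fin.val hc))]

lemma Pt_val_zero (v : Fin (k + 1) → VBDer R E) (i j : Fin (k + 1)) (z : Fin k)
    (hz : (z : ℕ) = 0) : Pt v i j z = ⁅(v i).X, (v j).X⁆ := by
  show (pairTuple v i j z).X = _
  rw [pairTuple_apply_zero _ _ _ _ hz, VBDer.bracket_X]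

end DFAux

end Main
section Main2

open Function

variable {R E : Type*} [CommRing R] [Algebra ℝ R]
  [AddCommGroup E] [Module ℝ E] [Module R E] [IsScalarTower ℝ R E]
variable {k : ℕ}

namespace DFAux

variable (lm : (Derivation ℝ R R) [⋀^Fin k]→ₗ[R] E)

lemma dS1_add (v : Fin (k + 1) → VBDer R E) (p : Fin (k + 1)) (x y : VBDer R E) :
    dS1 lm (update v p (x + y)) = dS1 lm (update v p x) + dS1 lm (update v p y) := by
  unfold dS1
  rw [← Finset.sum_add_distrib]
  refine Finset.sum_congr rfl fun i _ => ?_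
  by_cases hip : i = p
  · subst hip
    rw [Ws_update_self, Ws_update_self, Ws_update_self, update_self, update_self, update_self,
      VBDer.add_D, LinearMap.add_apply, smul_add]
  · have hpi : p ≠ i := fun h => hip h.symm
    obtain ⟨q, hq⟩ := Fin.exists_succAbove_eq hpi
    rw [Ws_update_eq v p i _ q hq, Ws_update_eq v p i _ q hq, Ws_update_eq v p i _ q hq,
      update_of_ne hip, update_of_ne hip, update_of_ne hip,
      VBDer.add_X, lm.map_update_add, map_add, smul_add]

lemma dS2_add (v : Fin (k + 1) → VBDer R E) (p : Fin (k + 1)) (x y : VBDer R E) :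
    dS2 lm (update v p (x + y)) = dS2 lm (update v p x) + dS2 lm (update v p y) := by
  unfold dS2
  rw [← Finset.sum_add_distrib]
  refine Finset.sum_congr rfl fun i _ => ?_
  rw [← Finset.sum_add_distrib]
  refine Finset.sum_congr rfl fun j _ => ?_
  by_cases hij : i < j
  · rw [if_pos hij, if_pos hij, if_pos hij]
    have hijv : (i : ℕ) < (j : ℕ) := hij
    have hk0 : 0 < k := by have := j.isLt; omega
    by_cases hip : i = p
    · subst hip
      rw [Pt_update_left v hijv ⟨0, hk0⟩ rfl (x + y), Pt_update_left v hijv ⟨0, hk0⟩ rfl x,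
        Pt_update_left v hijv ⟨0, hk0⟩ rfl y, VBDer.add_X, add_lie, lm.map_update_add, smul_add]
    · by_cases hjp : j = p
      · subst hjp
        rw [Pt_update_right v hijv ⟨0, hk0⟩ rfl (x + y), Pt_update_right v hijv ⟨0, hk0⟩ rfl x,
          Pt_update_right v hijv ⟨0, hk0⟩ rfl y, VBDer.add_X, lie_add, lm.map_update_add,
          smul_add]
      · have hpi' : (p : ℕ) ≠ (i : ℕ) := fun h => hip (Fin.ext h).symm
        have hpj' : (p : ℕ) ≠ (j : ℕ) := fun h => hjp (Fin.ext h).symm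
        obtain ⟨q, hq0, hqp, huniq⟩ := dIdx_preimage i j p hijv hpi' hpj'
        have hpi : p ≠ i := fun h => hpi' (congrArg Fin.val h)
        have hpj : p ≠ j := fun h => hpj' (congrArg Fin.val h)
        rw [Pt_update_of_ne v q hq0 hqp huniq hpi hpj (x + y),
          Pt_update_of_ne v q hq0 hqp huniq hpi hpj x,
          Pt_update_of_ne v q hq0 hqp huniq hpi hpj y,
          VBDer.add_X, lm.map_update_add, smul_add]
  · rw [if_neg hij, if_neg hij, if_neg hij, add_zero]

lemma dAdd (v : Fin (k + 1) → VBDer R E) (p : Fin (k + 1)) (x y : VBDer R E) :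
    dS1 lm (update v p (x + y)) + dS2 lm (update v p (x + y)) =
      (dS1 lm (update v p x) + dS2 lm (update v p x)) +
        (dS1 lm (update v p y) + dS2 lm (update v p y)) := by
  rw [dS1_add, dS2_add]; abel

end DFAux

end Main2
section Main3

open Function

variable {R E : Type*} [CommRing R] [Algebra ℝ R]
  [AddCommGroup E] [Module ℝ E] [Module R E] [IsScalarTower ℝ R E]
variable {k : ℕ}

namespace DFAux

variable (lm : (Derivation ℝ R R) [⋀^Fin k]→ₗ[R] E)

/-- Anomaly terms for the first sum. -/
def gfun (v : Fin (k + 1) → VBDer R E) (p : Fin (k + 1)) (r : R) (i : Fin (k + 1)) : E :=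
  if i = p then 0 else ((-1 : ℤ) ^ (i : ℕ)) • (((v i).X r) • lm (Ws v i))

/-- Anomaly terms for the second sum. -/
def hfun (v : Fin (k + 1) → VBDer R E) (p : Fin (k + 1)) (r : R) (i j : Fin (k + 1)) : E :=
  if i = p ∧ p < j then -(gfun lm v p r j)
  else if j = p ∧ i < p then -(gfun lm v p r i) else 0

lemma move1 {m : ℕ} (lm : (Derivation ℝ R R) [⋀^Fin (m + 1)]→ₗ[R] E)
    (v : Fin (m + 2) → VBDer R E) (p j : Fin (m + 2)) (hpj : (p : ℕ) < (j : ℕ))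
    (z : Fin (m + 1)) (hz : (z : ℕ) = 0) :
    lm (update (Pt v p j) z ((v p).X)) = ((-1 : ℤ) ^ (p : ℕ)) • lm (Ws v j) := by
  have hjm : (j : ℕ) ≤ m + 1 := by have := j.isLt; omega
  set t : Fin (m + 1) := ⟨(p : ℕ), by omega⟩ with htdef
  have htv : (t : ℕ) = (p : ℕ) := rfl
  refine sgn_flip ?_
  have h := AlternatingMap.move_front lm (update (Pt v p j) z ((v p).X)) (Ws v j) t ?_
  · rw [h, htv]
  · intro x
    have hc := Fin.cycleRange_val' t x
    by_cases h0 : ((t.cycleRange x : Fin (m + 1)) : ℕ) = 0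
    · rw [show t.cycleRange x = z from Fin.ext (by omega), update_self]
      have hx : (x : ℕ) = (p : ℕ) := by
        rw [h0] at hc
        split_ifs at hc <;> omega
      show (v (j.succAbove x)).X = (v p).X
      refine congrArg (fun o => (v o).X) (Fin.ext ?_)
      rw [succAbove_val]
      split_ifs <;> omega
    · have hcz : t.cycleRange x ≠ z := fun h => h0 (by rw [h, hz])
      rw [update_of_ne hcz]
      show (v (j.succAbove x)).X = (pairTuple v p j (t.cycleRange x)).X
      rw [pairTuple_apply_ne _ _ _ _ h0]
      refine congrArg (fun o => (v o).X) (Fin.ext ?_)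
      have h1 := succAbove_val j x
      have h2 := dIdx_val p j (t.cycleRange x)
      have hx1 := x.isLt
      have hx2 := (t.cycleRange x).isLt
      split_ifs at hc h1 h2 <;> omega

lemma move2 {m : ℕ} (lm : (Derivation ℝ R R) [⋀^Fin (m + 1)]→ₗ[R] E)
    (v : Fin (m + 2) → VBDer R E) (i p : Fin (m + 2)) (hip : (i : ℕ) < (p : ℕ))
    (z : Fin (m + 1)) (hz : (z : ℕ) = 0) :
    lm (update (Pt v i p) z ((v p).X)) = ((-1 : ℤ) ^ ((p : ℕ) - 1)) • lm (Ws v i) := by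
  have hpm : (p : ℕ) ≤ m + 1 := by have := p.isLt; omega
  set t : Fin (m + 1) := ⟨(p : ℕ) - 1, by omega⟩ with htdef
  have htv : (t : ℕ) = (p : ℕ) - 1 := rfl
  refine sgn_flip ?_
  have h := AlternatingMap.move_front lm (update (Pt v i p) z ((v p).X)) (Ws v i) t ?_
  · rw [h, htv]
  · intro x
    have hc := Fin.cycleRange_val' t x
    by_cases h0 : ((t.cycleRange x : Fin (m + 1)) : ℕ) = 0
    · rw [show t.cycleRange x = z from Fin.ext (by omega), update_self]
      have hx : (x : ℕ) = (p : ℕ) - 1 := by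
        rw [h0] at hc
        split_ifs at hc <;> omega
      show (v (i.succAbove x)).X = (v p).X
      refine congrArg (fun o => (v o).X) (Fin.ext ?_)
      rw [succAbove_val]
      split_ifs <;> omega
    · have hcz : t.cycleRange x ≠ z := fun h => h0 (by rw [h, hz])
      rw [update_of_ne hcz]
      show (v (i.succAbove x)).X = (pairTuple v i p (t.cycleRange x)).X
      rw [pairTuple_apply_ne _ _ _ _ h0]
      refine congrArg (fun o => (v o).X) (Fin.ext ?_)
      have h1 := succAbove_val i x
      have h2 := dIdx_val i p (t.cycleRange x)
      have hx1 := x.isLt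
      have hx2 := (t.cycleRange x).isLt
      split_ifs at hc h1 h2 <;> omega

lemma dS1_smul (v : Fin (k + 1) → VBDer R E) (p : Fin (k + 1)) (r : R) :
    dS1 lm (update v p (r • v p)) = r • dS1 lm v + ∑ i : Fin (k + 1), gfun lm v p r i := by
  unfold dS1
  rw [Finset.smul_sum, ← Finset.sum_add_distrib]
  refine Finset.sum_congr rfl fun i _ => ?_
  by_cases hip : i = p
  · subst hip
    unfold gfun
    rw [if_pos rfl, add_zero, update_self, Ws_update_self, VBDer.smul_D, LinearMap.smul_apply,
      smul_comm]
  · unfold gfun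
    rw [if_neg hip]
    have hpi : p ≠ i := fun h => hip h.symm
    obtain ⟨q, hq⟩ := Fin.exists_succAbove_eq hpi
    rw [update_of_ne hip, Ws_update_eq v p i _ q hq, VBDer.smul_X, lm.map_update_smul,
      show ((v p).X) = Ws v i q from by rw [Ws_val, hq], update_eq_self,
      VBDer.D_smul, smul_add, smul_comm ((-1 : ℤ) ^ (i : ℕ)) r, add_comm]

lemma dS2_smul (v : Fin (k + 1) → VBDer R E) (p : Fin (k + 1)) (r : R) :
    dS2 lm (update v p (r • v p)) =
      r • dS2 lm v + ∑ i : Fin (k + 1), ∑ j : Fin (k + 1), hfun lm v p r i j := by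
  unfold dS2
  rw [Finset.smul_sum, ← Finset.sum_add_distrib]
  refine Finset.sum_congr rfl fun i _ => ?_
  rw [Finset.smul_sum, ← Finset.sum_add_distrib]
  refine Finset.sum_congr rfl fun j _ => ?_
  by_cases hij : i < j
  · have hijv : (i : ℕ) < (j : ℕ) := hij
    have hk0 : 0 < k := by have := j.isLt; omega
    obtain ⟨m, rfl⟩ : ∃ m, k = m + 1 := ⟨k - 1, by omega⟩
    rw [if_pos hij, if_pos hij]
    by_cases hip : i = p
    · subst hip
      unfold hfun gfun
      rw [if_pos ⟨rfl, hij⟩, if_neg (by intro h; rw [h] at hij; exact lt_irrefl _ hij)]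
      rw [Pt_update_left v hijv ⟨0, hk0⟩ rfl (r • v i), VBDer.smul_X, Derivation.smul_lie',
        lm.map_update_sub, lm.map_update_smul,
        show ⁅(v i).X, (v j).X⁆ = Pt v i j ⟨0, hk0⟩ from (Pt_val_zero v i j _ rfl).symm,
        update_eq_self, lm.map_update_smul, move1 lm v i j hijv _ rfl]
      rw [smul_sub, smul_comm ((-1 : ℤ) ^ ((i : ℕ) + (j : ℕ))) r, sub_eq_add_neg]
      congr 1
      rw [smul_comm ((v j).X r) ((-1 : ℤ) ^ (i : ℕ)), sgn_mul,
        sgn_congr (show ((i : ℕ) + (j : ℕ) + (i : ℕ)) % 2 = (j : ℕ) % 2 by omega)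
          (((v j).X r) • lm (Ws v j))]
    · by_cases hjp : j = p
      · subst hjp
        unfold hfun gfun
        rw [if_neg (fun hc => absurd (hc.1 ▸ hij) (lt_irrefl _)), if_pos ⟨rfl, hij⟩,
          if_neg hip]
        rw [Pt_update_right v hijv ⟨0, hk0⟩ rfl (r • v j), VBDer.smul_X, Derivation.lie_smul',
          lm.map_update_add, lm.map_update_smul,
          show ⁅(v i).X, (v j).X⁆ = Pt v i j ⟨0, hk0⟩ from (Pt_val_zero v i j _ rfl).symm,
          update_eq_self, lm.map_update_smul, move2 lm v i j hijv _ rfl]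
        rw [smul_add, smul_comm ((-1 : ℤ) ^ ((i : ℕ) + (j : ℕ))) r]
        congr 1
        rw [smul_comm ((v i).X r) ((-1 : ℤ) ^ ((j : ℕ) - 1)), sgn_mul,
          sgn_congr (show ((i : ℕ) + (j : ℕ) + ((j : ℕ) - 1)) % 2 = ((i : ℕ) + 1) % 2 by omega)
            (((v i).X r) • lm (Ws v i)), sgn_neg]
      · unfold hfun
        rw [if_neg (fun hc => hip hc.1), if_neg (fun hc => hjp hc.1), add_zero]
        have hpi' : (p : ℕ) ≠ (i : ℕ) := fun h => hip (Fin.ext h).symm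
        have hpj' : (p : ℕ) ≠ (j : ℕ) := fun h => hjp (Fin.ext h).symm
        obtain ⟨q, hq0, hqp, huniq⟩ := dIdx_preimage i j p hijv hpi' hpj'
        have hpi : p ≠ i := fun h => hpi' (congrArg Fin.val h)
        have hpj : p ≠ j := fun h => hpj' (congrArg Fin.val h)
        rw [Pt_update_of_ne v q hq0 hqp huniq hpi hpj (r • v p), VBDer.smul_X,
          lm.map_update_smul, show ((v p).X) = Pt v i j q from (Pt_val_preim v q hq0 hqp).symm,
          update_eq_self, smul_comm]
  · rw [if_neg hij, if_neg hij, smul_zero, zero_add]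
    unfold hfun
    have hn1 : ¬(i = p ∧ p < j) := fun hc => hij (by rw [hc.1]; exact hc.2)
    have hn2 : ¬(j = p ∧ i < p) := fun hc => hij (by rw [← hc.1] at hc; exact hc.2)
    rw [if_neg hn1, if_neg hn2]

end DFAux

end Main3
section Main4

open Function

variable {R E : Type*} [CommRing R] [Algebra ℝ R]
  [AddCommGroup E] [Module ℝ E] [Module R E] [IsScalarTower ℝ R E]
variable {k : ℕ}

namespace DFAux

variable (lm : (Derivation ℝ R R) [⋀^Fin k]→ₗ[R] E)

lemma anomaly_zero (v : Fin (k + 1) → VBDer R E) (p : Fin (k + 1)) (r : R) :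
    (∑ i : Fin (k + 1), gfun lm v p r i) +
      (∑ i : Fin (k + 1), ∑ j : Fin (k + 1), hfun lm v p r i j) = 0 := by
  have hrow : ∀ i : Fin (k + 1), (∑ j : Fin (k + 1), hfun lm v p r i j) =
      (if i = p then ∑ j : Fin (k + 1), (if p < j then -(gfun lm v p r j) else 0)
       else (if i < p then -(gfun lm v p r i) else 0)) := by
    intro i
    by_cases hi : i = p
    · subst hi
      rw [if_pos rfl]
      refine Finset.sum_congr rfl fun j _ => ?_
      unfold hfun
      by_cases hpj : i < j
      · rw [if_pos ⟨rfl, hpj⟩, if_pos hpj]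
      · have hn2 : ¬(j = i ∧ i < i) := fun hc => lt_irrefl _ hc.2
        rw [if_neg (fun hc : i = i ∧ i < j => hpj hc.2), if_neg hn2, if_neg hpj]
    · rw [if_neg hi]
      have hstep : ∀ j : Fin (k + 1), hfun lm v p r i j =
          (if j = p then (if i < p then -(gfun lm v p r i) else 0) else 0) := by
        intro j
        unfold hfun
        by_cases hj : j = p
        · subst hj
          rw [if_neg (fun hc : i = j ∧ j < j => hi hc.1), if_pos rfl]
          by_cases hip : i < j
          · rw [if_pos ⟨rfl, hip⟩, if_pos hip]
          · rw [if_neg (fun hc : j = j ∧ i < j => hip hc.2), if_neg hip]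
        · rw [if_neg (fun hc : i = p ∧ p < j => hi hc.1),
            if_neg (fun hc : j = p ∧ i < p => hj hc.1), if_neg hj]
      rw [Finset.sum_congr rfl fun j _ => hstep j, Finset.sum_ite_eq' Finset.univ p
        (fun _ => if i < p then -(gfun lm v p r i) else 0), if_pos (Finset.mem_univ p)]
  rw [Finset.sum_congr rfl fun i _ => hrow i]
  have hsplit : ∀ i : Fin (k + 1),
      (if i = p then ∑ j : Fin (k + 1), (if p < j then -(gfun lm v p r j) else 0)
       else (if i < p then -(gfun lm v p r i) else 0))
      = (if i = p then ∑ j : Fin (k + 1), (if p < j then -(gfun lm v p r j) else 0) else 0)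
        + (if i < p then -(gfun lm v p r i) else 0) := by
    intro i
    by_cases hi : i = p
    · subst hi; rw [if_pos rfl, if_pos rfl, if_neg (lt_irrefl i), add_zero]
    · rw [if_neg hi, if_neg hi, zero_add]
  rw [Finset.sum_congr rfl fun i _ => hsplit i, Finset.sum_add_distrib,
    Finset.sum_ite_eq' Finset.univ p
      (fun _ => ∑ j : Fin (k + 1), (if p < j then -(gfun lm v p r j) else 0)),
    if_pos (Finset.mem_univ p)]
  rw [show (∑ i : Fin (k + 1), gfun lm v p r i) +
      ((∑ j : Fin (k + 1), (if p < j then -(gfun lm v p r j) else 0)) +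
        (∑ i : Fin (k + 1), (if i < p then -(gfun lm v p r i) else 0))) =
      ∑ i : Fin (k + 1), (gfun lm v p r i + ((if p < i then -(gfun lm v p r i) else 0)
        + (if i < p then -(gfun lm v p r i) else 0))) from by
    rw [Finset.sum_add_distrib, Finset.sum_add_distrib]]
  refine Finset.sum_eq_zero fun i _ => ?_
  by_cases h1 : i = p
  · subst h1; simp [gfun]
  · by_cases h2 : i < p
    · simp [gfun, h1, h2, lt_asymm h2]
    · have h3 : p < i := lt_of_le_of_ne (not_lt.mp h2) (fun h => h1 h.symm)
      simp [gfun, h1, h2, h3]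

lemma dSmul (v : Fin (k + 1) → VBDer R E) (p : Fin (k + 1)) (r : R) (x : VBDer R E) :
    dS1 lm (update v p (r • x)) + dS2 lm (update v p (r • x)) =
      r • (dS1 lm (update v p x) + dS2 lm (update v p x)) := by
  have h1 : update v p (r • x) = update (update v p x) p (r • (update v p x p)) := by
    rw [update_self, update_idem]
  rw [h1, dS1_smul, dS2_smul, smul_add]
  have h2 := anomaly_zero lm (update v p x) p r
  rw [show (r • dS1 lm (update v p x) + ∑ i : Fin (k + 1), gfun lm (update v p x) p r i) +
      (r • dS2 lm (update v p x) +
        ∑ i : Fin (k + 1), ∑ j : Fin (k + 1), hfun lm (update v p x) p r i j) =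
      (r • dS1 lm (update v p x) + r • dS2 lm (update v p x)) +
        ((∑ i : Fin (k + 1), gfun lm (update v p x) p r i) +
          (∑ i : Fin (k + 1), ∑ j : Fin (k + 1), hfun lm (update v p x) p r i j)) from by
    abel, h2, add_zero]

end DFAux

end Main4
section Main5

open Function

variable {R E : Type*} [CommRing R] [Algebra ℝ R]
  [AddCommGroup E] [Module ℝ E] [Module R E] [IsScalarTower ℝ R E]
variable {k : ℕ}

namespace DFAux

variable (lm : (Derivation ℝ R R) [⋀^Fin k]→ₗ[R] E)

section Adj

variable {v : Fin (k + 1) → VBDer R E} {p q : Fin (k + 1)}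
  (hpq : (p : ℕ) + 1 = (q : ℕ)) (hv : v p = v q)

include hpq hv

lemma Ws_pq : Ws v p = Ws v q := by
  funext t
  show (v (p.succAbove t)).X = (v (q.succAbove t)).X
  have h1 := succAbove_val p t
  have h2 := succAbove_val q t
  by_cases hlt : (t : ℕ) = (p : ℕ)
  · have e1 : (p.succAbove t : ℕ) = (q : ℕ) := by split_ifs at h1 <;> omega
    have e2 : (q.succAbove t : ℕ) = (p : ℕ) := by split_ifs at h2 <;> omega
    rw [show p.succAbove t = q from Fin.ext e1, show q.succAbove t = p from Fin.ext e2, hv]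
  · have : (p.succAbove t : ℕ) = (q.succAbove t : ℕ) := by split_ifs at h1 h2 <;> omega
    rw [show p.succAbove t = q.succAbove t from Fin.ext this]

lemma Ws_dup (i : Fin (k + 1)) (hip : i ≠ p) (hiq : i ≠ q) : lm (Ws v i) = 0 := by
  obtain ⟨a, ha⟩ := Fin.exists_succAbove_eq (show p ≠ i from fun h => hip h.symm)
  obtain ⟨b, hb⟩ := Fin.exists_succAbove_eq (show q ≠ i from fun h => hiq h.symm)
  have hab : a ≠ b := by
    intro h
    rw [h, hb] at ha
    exact absurd (congrArg Fin.val ha) (by omega)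
  refine lm.map_eq_zero_of_eq (Ws v i) ?_ hab
  show (v (i.succAbove a)).X = (v (i.succAbove b)).X
  rw [ha, hb, hv]

lemma Pt_pq_zero : lm (Pt v p q) = 0 := by
  have hk0 : 0 < k := by have := q.isLt; omega
  have hz : Pt v p q ⟨0, hk0⟩ = 0 := by
    rw [Pt_val_zero v p q _ rfl, show (v p).X = (v q).X from congrArg VBDer.X hv, lie_self]
  rw [show Pt v p q = update (Pt v p q) ⟨0, hk0⟩ (0 : Derivation ℝ R R) from by
    rw [← hz, update_eq_self]]
  exact lm.map_update_zero _ _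

lemma Pt_shift_left {j : Fin (k + 1)} (hj : (q : ℕ) < (j : ℕ)) : Pt v p j = Pt v q j := by
  funext t
  by_cases ht0 : (t : ℕ) = 0
  · show (pairTuple v p j t).X = (pairTuple v q j t).X
    rw [pairTuple_apply_zero _ _ _ _ ht0, pairTuple_apply_zero _ _ _ _ ht0,
      VBDer.bracket_X, VBDer.bracket_X, show (v p).X = (v q).X from congrArg VBDer.X hv]
  · show (pairTuple v p j t).X = (pairTuple v q j t).X
    rw [pairTuple_apply_ne _ _ _ _ ht0, pairTuple_apply_ne _ _ _ _ ht0]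
    have h1 := dIdx_val p j t
    have h2 := dIdx_val q j t
    have ht := t.isLt
    by_cases hcc : ((dIdx p j t : Fin (k + 1)) : ℕ) = ((dIdx q j t : Fin (k + 1)) : ℕ)
    · rw [show dIdx p j t = dIdx q j t from Fin.ext hcc]
    · have e1 : dIdx p j t = q := Fin.ext (by split_ifs at h1 h2 <;> omega)
      have e2 : dIdx q j t = p := Fin.ext (by split_ifs at h1 h2 <;> omega)
      rw [e1, e2, hv]

lemma Pt_shift_right {i : Fin (k + 1)} (hi : (i : ℕ) < (p : ℕ)) : Pt v i p = Pt v i q := by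
  funext t
  by_cases ht0 : (t : ℕ) = 0
  · show (pairTuple v i p t).X = (pairTuple v i q t).X
    rw [pairTuple_apply_zero _ _ _ _ ht0, pairTuple_apply_zero _ _ _ _ ht0,
      VBDer.bracket_X, VBDer.bracket_X, show (v p).X = (v q).X from congrArg VBDer.X hv]
  · show (pairTuple v i p t).X = (pairTuple v i q t).X
    rw [pairTuple_apply_ne _ _ _ _ ht0, pairTuple_apply_ne _ _ _ _ ht0]
    have h1 := dIdx_val i p t
    have h2 := dIdx_val i q t
    have ht := t.isLt
    by_cases hcc : ((dIdx i p t : Fin (k + 1)) : ℕ) = ((dIdx i q t : Fin (k + 1)) : ℕ)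
    · rw [show dIdx i p t = dIdx i q t from Fin.ext hcc]
    · have e1 : dIdx i p t = q := Fin.ext (by split_ifs at h1 h2 <;> omega)
      have e2 : dIdx i q t = p := Fin.ext (by split_ifs at h1 h2 <;> omega)
      rw [e1, e2, hv]

lemma Pt_dup {i j : Fin (k + 1)} (hij : (i : ℕ) < (j : ℕ))
    (hip : (i : ℕ) ≠ (p : ℕ)) (hiq : (i : ℕ) ≠ (q : ℕ))
    (hjp : (j : ℕ) ≠ (p : ℕ)) (hjq : (j : ℕ) ≠ (q : ℕ)) : lm (Pt v i j) = 0 := by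
  obtain ⟨a, ha0, hap, -⟩ := dIdx_preimage i j p hij (fun h => hip h.symm) (fun h => hjp h.symm)
  obtain ⟨b, hb0, hbq, -⟩ := dIdx_preimage i j q hij (fun h => hiq h.symm) (fun h => hjq h.symm)
  have hab : a ≠ b := by
    intro h
    rw [h, hbq] at hap
    exact absurd (congrArg Fin.val hap) (by omega)
  refine lm.map_eq_zero_of_eq (Pt v i j) ?_ hab
  rw [Pt_val_preim v a ha0 hap, Pt_val_preim v b hb0 hbq, hv]

/-- The reflection exchanging `p` and `q`. -/
def rho (p q i : Fin (k + 1)) : Fin (k + 1) := if i = p then q else if i = q then p else i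

omit hpq hv in
lemma rho_invol (hne : p ≠ q) (i : Fin (k + 1)) : rho p q (rho p q i) = i := by
  unfold rho
  by_cases h1 : i = p
  · subst h1
    rw [if_pos rfl, if_neg (fun h => hne h.symm), if_pos rfl]
  · by_cases h2 : i = q
    · subst h2
      rw [if_neg h1, if_pos rfl, if_pos rfl]
    · rw [if_neg h1, if_neg h2, if_neg h1, if_neg h2]

lemma dS1_adj : dS1 lm v = 0 := by
  unfold dS1
  have hne : p ≠ q := fun h => by rw [h] at hpq; omega
  refine Finset.sum_ninvolution (rho p q) ?_ ?_ (fun i => Finset.mem_univ _)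
    (fun i => rho_invol hne i)
  · intro i
    by_cases h1 : i = p
    · subst h1
      rw [show rho i q i = q from by unfold rho; rw [if_pos rfl]]
      rw [Ws_pq hpq hv, hv, ← add_smul,
        show ((-1 : ℤ) ^ (i : ℕ) + (-1 : ℤ) ^ (q : ℕ)) = 0 from by
          rw [show (q : ℕ) = (i : ℕ) + 1 from hpq.symm, pow_succ]; ring, zero_smul]
    · by_cases h2 : i = q
      · subst h2
        rw [show rho p i i = p from by unfold rho; rw [if_neg (fun h => h1 h), if_pos rfl]]
        rw [Ws_pq hpq hv, hv, ← add_smul,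
          show ((-1 : ℤ) ^ (i : ℕ) + (-1 : ℤ) ^ (p : ℕ)) = 0 from by
            rw [show (i : ℕ) = (p : ℕ) + 1 from hpq.symm, pow_succ]; ring, zero_smul]
      · rw [show rho p q i = i from by unfold rho; rw [if_neg h1, if_neg h2]]
        rw [Ws_dup lm hpq hv i h1 h2, map_zero, smul_zero, add_zero]
  · intro i hfi hgi
    by_cases h1 : i = p
    · subst h1
      have hq : rho i q i = q := by unfold rho; rw [if_pos rfl]
      rw [hq] at hgi
      exact hne hgi.symm
    · by_cases h2 : i = q
      · subst h2
        have hp : rho p i i = p := by unfold rho; rw [if_neg h1, if_pos rfl]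
        rw [hp] at hgi
        exact hne hgi
      · exact hfi (by rw [Ws_dup lm hpq hv i h1 h2, map_zero, smul_zero])

end Adj

end DFAux

end Main5
section Main6

open Function

variable {R E : Type*} [CommRing R] [Algebra ℝ R]
  [AddCommGroup E] [Module ℝ E] [Module R E] [IsScalarTower ℝ R E]
variable {k : ℕ}

namespace DFAux

lemma sgn_cancel {a b : ℕ} (h : a + 1 = b) (u : E) :
    ((-1 : ℤ) ^ a) • u + ((-1 : ℤ) ^ b) • u = 0 := by
  rw [← add_smul, show ((-1 : ℤ) ^ a + (-1 : ℤ) ^ b) = 0 from by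
    rw [← h, pow_succ]; ring, zero_smul]

variable (lm : (Derivation ℝ R R) [⋀^Fin k]→ₗ[R] E)

section Adj2

variable {v : Fin (k + 1) → VBDer R E} {p q : Fin (k + 1)}
  (hpq : (p : ℕ) + 1 = (q : ℕ)) (hv : v p = v q)

include hpq hv

lemma dS2_adj : dS2 lm v = 0 := by
  have hne : p ≠ q := fun h => by rw [h] at hpq; omega
  unfold dS2
  rw [← Finset.sum_product']
  have rp : rho p q p = q := by unfold rho; rw [if_pos rfl]
  have rq : rho p q q = p := by unfold rho; rw [if_neg (fun h => hne h.symm), if_pos rfl]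
  have rother : ∀ i : Fin (k + 1), i ≠ p → i ≠ q → rho p q i = i := fun i h1 h2 => by
    unfold rho; rw [if_neg h1, if_neg h2]
  have hzero : ∀ i j : Fin (k + 1), i ≠ p → i ≠ q → j ≠ p → j ≠ q →
      (if i < j then ((-1 : ℤ) ^ ((i : ℕ) + (j : ℕ))) • lm (Pt v i j) else 0) = 0 := by
    intro i j h1 h2 h3 h4
    by_cases hij : i < j
    · rw [if_pos hij, Pt_dup lm hpq hv hij
        (fun h => h1 (Fin.ext h)) (fun h => h2 (Fin.ext h))
        (fun h => h3 (Fin.ext h)) (fun h => h4 (Fin.ext h)), smul_zero]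
    · rw [if_neg hij]
  have hfpq : (if p < q then ((-1 : ℤ) ^ ((p : ℕ) + (q : ℕ))) • lm (Pt v p q) else 0) = 0 := by
    by_cases hc : p < q
    · rw [if_pos hc, Pt_pq_zero lm hpq hv, smul_zero]
    · rw [if_neg hc]
  refine Finset.sum_ninvolution (fun a => (rho p q a.1, rho p q a.2)) ?_ ?_
    (fun a => Finset.mem_product.mpr ⟨Finset.mem_univ _, Finset.mem_univ _⟩)
    (fun a => Prod.ext (rho_invol hne _) (rho_invol hne _))
  · rintro ⟨i, j⟩
    dsimp only
    by_cases h1 : i = p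
    · rw [h1]
      by_cases h2 : j = q
      · rw [h2, rp, rq, hfpq, zero_add,
          if_neg (fun hc : q < p => by rw [Fin.lt_def] at hc; omega)]
      · by_cases h2' : j = p
        · rw [h2', rp, if_neg (lt_irrefl p), if_neg (lt_irrefl q), add_zero]
        · rw [rp, rother j h2' h2]
          by_cases hpj : p < j
          · have hqj : q < j := by
              rw [Fin.lt_def] at hpj ⊢
              have : (j : ℕ) ≠ (q : ℕ) := fun h => h2 (Fin.ext h)
              omega
            rw [if_pos hpj, if_pos hqj,
              Pt_shift_left hpq hv (by rw [Fin.lt_def] at hqj; exact hqj),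
              sgn_cancel (by rw [Fin.lt_def] at hpj; omega)]
          · have hnqj : ¬ q < j := by rw [Fin.lt_def] at hpj ⊢; omega
            rw [if_neg hpj, if_neg hnqj, add_zero]
    · by_cases h1' : i = q
      · rw [h1']
        by_cases h2 : j = p
        · rw [h2, rq, rp, hfpq,
            if_neg (fun hc : q < p => by rw [Fin.lt_def] at hc; omega), zero_add]
        · by_cases h2' : j = q
          · rw [h2', rq, if_neg (lt_irrefl q), if_neg (lt_irrefl p), add_zero]
          · rw [rq, rother j h2 h2']
            by_cases hqj : q < j
            · have hpj : p < j := by rw [Fin.lt_def] at hqj ⊢; omega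
              rw [if_pos hqj, if_pos hpj,
                Pt_shift_left hpq hv (by rw [Fin.lt_def] at hqj; exact hqj), add_comm,
                sgn_cancel (by rw [Fin.lt_def] at hqj; omega)]
            · have hnpj : ¬ p < j := by
                rw [Fin.lt_def] at hqj ⊢
                have : (j : ℕ) ≠ (q : ℕ) := fun h => h2' (Fin.ext h)
                omega
              rw [if_neg hqj, if_neg hnpj, add_zero]
      · by_cases h2 : j = p
        · rw [h2, rother i h1 h1', rp]
          by_cases hip : i < p
          · have hiq : i < q := by rw [Fin.lt_def] at hip ⊢; omega
            rw [if_pos hip, if_pos hiq,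
              Pt_shift_right hpq hv (by rw [Fin.lt_def] at hip; exact hip),
              sgn_cancel (by omega)]
          · have hniq : ¬ i < q := by
              rw [Fin.lt_def] at hip ⊢
              have hiq' : (i : ℕ) ≠ (q : ℕ) := fun h => h1' (Fin.ext h)
              omega
            rw [if_neg hip, if_neg hniq, add_zero]
        · by_cases h2' : j = q
          · rw [h2', rother i h1 h1', rq]
            by_cases hiq : i < q
            · have hip : i < p := by
                rw [Fin.lt_def] at hiq ⊢
                have : (i : ℕ) ≠ (p : ℕ) := fun h => h1 (Fin.ext h)
                omega
              rw [if_pos hiq, if_pos hip,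
                Pt_shift_right hpq hv (by rw [Fin.lt_def] at hip; exact hip), add_comm,
                sgn_cancel (by omega)]
            · have hnip : ¬ i < p := by rw [Fin.lt_def] at hiq ⊢; omega
              rw [if_neg hiq, if_neg hnip, add_zero]
          · rw [rother i h1 h1', rother j h2 h2', hzero i j h1 h1' h2 h2', add_zero]
  · rintro ⟨i, j⟩ hfa hga
    dsimp only at hfa hga
    have hgi : rho p q i = i := congrArg Prod.fst hga
    have hgj : rho p q j = j := congrArg Prod.snd hga
    have h1 : i ≠ p := by intro h; rw [h, rp] at hgi; exact hne hgi.symm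
    have h1' : i ≠ q := by intro h; rw [h, rq] at hgi; exact hne hgi
    have h2 : j ≠ p := by intro h; rw [h, rp] at hgj; exact hne hgj.symm
    have h2' : j ≠ q := by intro h; rw [h, rq] at hgj; exact hne hgj
    exact hfa (hzero i j h1 h1' h2 h2')

lemma dAdj : dS1 lm v + dS2 lm v = 0 := by
  rw [dS1_adj lm hpq hv, dS2_adj lm hpq hv, add_zero]

end Adj2

end DFAux

end Main6
section Main7

open Function

variable {R E : Type*} [CommRing R] [Algebra ℝ R]
  [AddCommGroup E] [Module ℝ E] [Module R E] [IsScalarTower ℝ R E]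
variable {k : ℕ}

namespace DFAux

variable (lm : (Derivation ℝ R R) [⋀^Fin k]→ₗ[R] E)

/-- The de Rham differential of `jStar lm` as an alternating map. -/
def dAlt : AlternatingMap R (VBDer R E) E (Fin (k + 1)) where
  toFun v := dS1 lm v + dS2 lm v
  map_update_add' := by
    intro dec v i x y
    rw [Subsingleton.elim dec (instDecidableEqFin (k + 1))]
    exact dAdd lm v i x y
  map_update_smul' := by
    intro dec v i c x
    rw [Subsingleton.elim dec (instDecidableEqFin (k + 1))]
    exact dSmul lm v i c x
  map_eq_zero_of_eq' := by
    intro v i j hvij hij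
    rcases hij.lt_or_gt with h | h
    · exact gen_eq_zero_of_eq (F := fun w => dS1 lm w + dS2 lm w)
        (fun w a x y => dAdd lm w a x y)
        (fun w a b hab hw => dAdj lm hab hw) v i j h hvij
    · exact gen_eq_zero_of_eq (F := fun w => dS1 lm w + dS2 lm w)
        (fun w a x y => dAdd lm w a x y)
        (fun w a b hab hw => dAdj lm hab hw) v j i h hvij.symm

lemma isMultAlt_dF_jStar (lam : (Fin k → Derivation ℝ R R) → E)
    (hlam : IsMultAlt R lam) : IsMultAlt R (dF (jStar lam)) := by
  obtain ⟨lm, hlm⟩ := hlam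
  refine ⟨dAlt lm, funext fun v => ?_⟩
  show dS1 lm v + dS2 lm v = dF (jStar lam) v
  rw [dF_jStar_eq lm lam hlm v]

lemma lm_zero_entry (T : Fin k → Derivation ℝ R R) (t : Fin k) (h : T t = 0) :
    lm T = 0 := by
  rw [show T = update T t 0 from by rw [← h, update_eq_self], lm.map_update_zero]

lemma dS1_cons (Φ : E →ₗ[R] E) (w : Fin k → VBDer R E) :
    dS1 lm (Fin.cons (VBDer.ofEnd Φ) w) = Φ (lm fun i => (w i).X) := by
  set v : Fin (k + 1) → VBDer R E := Fin.cons (VBDer.ofEnd Φ) w with hvdef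
  have hv0 : v 0 = VBDer.ofEnd Φ := by rw [hvdef]; exact Fin.cons_zero _ _
  have hvs : ∀ t : Fin k, v (Fin.succ t) = w t := fun t => by
    rw [hvdef]; exact Fin.cons_succ _ _ _
  unfold dS1
  rw [Fin.sum_univ_succ]
  have h0 : ((-1 : ℤ) ^ ((0 : Fin (k + 1)) : ℕ)) • (v 0).D (lm (Ws v 0)) =
      Φ (lm fun i => (w i).X) := by
    rw [show ((0 : Fin (k + 1)) : ℕ) = 0 from rfl, pow_zero, one_smul, hv0]
    rw [show Ws v 0 = fun i => (w i).X from by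
      funext t
      show (v ((0 : Fin (k + 1)).succAbove t)).X = (w t).X
      rw [Fin.zero_succAbove, hvs]]
    rfl
  rw [h0]
  rw [Finset.sum_eq_zero fun (s : Fin k) _ => ?_, add_zero]
  have ht0 : ((Fin.succ s).succAbove ⟨0, s.pos⟩ : ℕ) = 0 := by
    rw [succAbove_val]
    have h1 : ((⟨0, s.pos⟩ : Fin k) : ℕ) = 0 := rfl
    have h2 : ((Fin.succ s : Fin (k + 1)) : ℕ) = (s : ℕ) + 1 := rfl
    split_ifs <;> omega
  have hz : Ws v (Fin.succ s) ⟨0, s.pos⟩ = 0 := by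
    show (v ((Fin.succ s).succAbove ⟨0, s.pos⟩)).X = 0
    rw [show (Fin.succ s).succAbove ⟨0, s.pos⟩ = 0 from Fin.ext ht0, hv0, VBDer.ofEnd_X]
  rw [lm_zero_entry lm _ _ hz, map_zero, smul_zero]

lemma dS2_cons (Φ : E →ₗ[R] E) (w : Fin k → VBDer R E) :
    dS2 lm (Fin.cons (VBDer.ofEnd Φ) w) = 0 := by
  set v : Fin (k + 1) → VBDer R E := Fin.cons (VBDer.ofEnd Φ) w with hvdef
  have hv0 : v 0 = VBDer.ofEnd Φ := by rw [hvdef]; exact Fin.cons_zero _ _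
  unfold dS2
  refine Finset.sum_eq_zero fun i _ => Finset.sum_eq_zero fun j _ => ?_
  by_cases hij : i < j
  · rw [if_pos hij]
    have hijv : (i : ℕ) < (j : ℕ) := hij
    have hk0 : 0 < k := by have := j.isLt; omega
    by_cases hi0 : (i : ℕ) = 0
    · have hz : Pt v i j ⟨0, hk0⟩ = 0 := by
        rw [Pt_val_zero _ _ _ _ rfl, show i = 0 from Fin.ext hi0, hv0,
          VBDer.ofEnd_X, zero_lie]
      rw [lm_zero_entry lm _ _ hz, smul_zero]
    · have hk1 : 1 < k := by
        have h1 : (i : ℕ) < (j : ℕ) := hijv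
        have h2 : (j : ℕ) < k + 1 := j.isLt
        have h3 : (i : ℕ) ≠ 0 := hi0
        omega
      have hd : dIdx i j ⟨1, hk1⟩ = 0 := by
        refine Fin.ext ?_
        rw [dIdx_val]
        have h1 : ((⟨1, hk1⟩ : Fin k) : ℕ) = 1 := rfl
        have h0 : ((0 : Fin (k + 1)) : ℕ) = 0 := rfl
        have h2 : (i : ℕ) ≠ 0 := hi0
        split_ifs <;> omega
      have hz : Pt v i j ⟨1, hk1⟩ = 0 := by
        show (pairTuple v i j ⟨1, hk1⟩).X = 0
        rw [pairTuple_apply_ne _ _ _ _ (by norm_num), hd, hv0, VBDer.ofEnd_X]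
      rw [lm_zero_entry lm _ _ hz, smul_zero]
  · rw [if_neg hij]

lemma isAssoc_dF_jStar (lam : (Fin k → Derivation ℝ R R) → E)
    (hlam : IsMultAlt R lam) : IsAssoc (dF (jStar lam)) lam := by
  obtain ⟨lm, hlm⟩ := hlam
  intro Φ w
  rw [dF_jStar_eq lm lam hlm, dS1_cons, dS2_cons, add_zero, hlm]

lemma assoc_unique (hsurj : SymbolSurj R E) (μ : (Fin (k + 1) → VBDer R E) → E)
    (lam lam' : (Fin k → Derivation ℝ R R) → E)
    (h1 : IsAssoc μ lam) (h2 : IsAssoc μ lam') : lam' = lam := by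
  funext Zt
  choose σ hσ using hsurj
  have hw : (fun i => ((fun i => σ (Zt i)) i).X) = Zt := funext fun i => hσ (Zt i)
  have e1 := h1 (LinearMap.id) (fun i => σ (Zt i))
  have e2 := h2 (LinearMap.id) (fun i => σ (Zt i))
  rw [hw, LinearMap.id_apply] at e1 e2
  rw [← e2, e1]

end DFAux

end Main7
section Main8

open Function

variable {R E : Type*} [CommRing R] [Algebra ℝ R]
  [AddCommGroup E] [Module ℝ E] [Module R E] [IsScalarTower ℝ R E]
variable {k : ℕ}

namespace DFAux

lemma key_lemma (mu' : AlternatingMap R (VBDer R E) E (Fin (k + 1)))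
    (lam : (Fin k → Derivation ℝ R R) → E) (hass : IsAssoc (⇑mu') lam)
    (Φ : E →ₗ[R] E) (w : Fin (k + 1) → VBDer R E) :
    dF (⇑mu') (Fin.cons (VBDer.ofEnd Φ) w) = Φ (mu' w - dF (jStar lam) w) := by
  set v : Fin (k + 2) → VBDer R E := Fin.cons (VBDer.ofEnd Φ) w with hvdef
  have hv0 : v 0 = VBDer.ofEnd Φ := by rw [hvdef]; exact Fin.cons_zero _ _
  have hvs : ∀ t : Fin (k + 1), v (Fin.succ t) = w t := fun t => by
    rw [hvdef]; exact Fin.cons_succ _ _ _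
  have hassoc0 : ∀ (b : VBDer R E) (hb : b.X = 0) (u : Fin k → VBDer R E),
      mu' (Fin.cons b u) = b.D (lam fun i => (u i).X) := by
    intro b hb u
    conv_lhs => rw [show b = VBDer.ofEnd (b.toLin hb) from VBDer.eq_ofEnd b hb]
    rw [hass (b.toLin hb) u]
    rfl
  have hS1 : (∑ i : Fin (k + 2), ((-1 : ℤ) ^ (i : ℕ)) •
        (v i).D (mu' fun l => v (i.succAbove l))) =
      Φ (mu' w) + ∑ s : Fin (k + 1),
        ((-1 : ℤ) ^ ((s : ℕ) + 1)) • (w s).D (Φ (lam (Ws w s))) := by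
    rw [Fin.sum_univ_succ]
    congr 1
    · rw [show (((0 : Fin (k + 2)) : ℕ)) = 0 from rfl, pow_zero, one_smul, hv0,
        show (fun l => v ((0 : Fin (k + 2)).succAbove l)) = w from funext fun l => by
          rw [Fin.zero_succAbove, hvs]]
      rfl
    · refine Finset.sum_congr rfl fun s _ => ?_
      rw [hvs, show (fun l => v ((Fin.succ s).succAbove l)) =
          Fin.cons (VBDer.ofEnd Φ) (fun t => w (s.succAbove t)) from funext fun l => ?_,
        hass Φ (fun t => w (s.succAbove t)), Fin.val_succ]
      · rfl
      · refine Fin.cases ?_ (fun a => ?_) l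
        · rw [show (Fin.succ s).succAbove 0 = 0 from Fin.ext (by
            simp only [succAbove_val, Fin.val_succ, Fin.val_zero]
            simp), hv0]
          rfl
        · rw [show (Fin.succ s).succAbove (Fin.succ a) = Fin.succ (s.succAbove a) from
            Fin.ext (by
              simp only [succAbove_val, Fin.val_succ]
              split_ifs <;> omega), hvs]
          rw [Fin.cons_succ]
  have hS2 : (∑ i : Fin (k + 2), ∑ j : Fin (k + 2),
        if i < j then ((-1 : ℤ) ^ ((i : ℕ) + (j : ℕ))) • mu' (pairTuple v i j) else 0) =
      (∑ t : Fin (k + 1), ((-1 : ℤ) ^ ((t : ℕ) + 1)) •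
          (Φ ((w t).D (lam (Ws w t))) - (w t).D (Φ (lam (Ws w t)))))
        + ∑ s : Fin (k + 1), ∑ t : Fin (k + 1),
            (if s < t then -(((-1 : ℤ) ^ ((s : ℕ) + (t : ℕ))) • Φ (lam (Pt w s t))) else 0) := by
    rw [Fin.sum_univ_succ]
    congr 1
    · -- row i = 0
      rw [Fin.sum_univ_succ, if_neg (lt_irrefl (0 : Fin (k + 2))), zero_add]
      refine Finset.sum_congr rfl fun t _ => ?_
      rw [if_pos (Fin.succ_pos t)]
      have hBX : (VBDer.bracket (VBDer.ofEnd Φ) (w t)).X = 0 := by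
        rw [VBDer.bracket_X, VBDer.ofEnd_X, zero_lie]
      rw [show pairTuple v 0 (Fin.succ t) =
          Fin.cons (VBDer.bracket (VBDer.ofEnd Φ) (w t)) (fun a => w (t.succAbove a)) from
          funext fun l => ?_, hassoc0 _ hBX _]
      · rw [show (((0 : Fin (k + 2)) : ℕ)) = 0 from rfl, Fin.val_succ, zero_add]
        rfl
      · refine Fin.cases ?_ (fun a => ?_) l
        · rw [pairTuple_apply_zero _ _ _ _ rfl, hv0, hvs]
          rfl
        · rw [pairTuple_apply_ne _ _ _ _ (by rw [Fin.val_succ]; omega),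
            show dIdx 0 (Fin.succ t) (Fin.succ a) = Fin.succ (t.succAbove a) from Fin.ext (by
              simp only [dIdx_val, Fin.val_succ, succAbove_val, Fin.val_zero]
              split_ifs <;> omega), hvs]
          rw [Fin.cons_succ]
    · -- rows i = s.succ
      refine Finset.sum_congr rfl fun s _ => ?_
      rw [Fin.sum_univ_succ, if_neg (Fin.not_lt_zero _), zero_add]
      refine Finset.sum_congr rfl fun t _ => ?_
      by_cases hst : s < t
      · have hst' : Fin.succ s < Fin.succ t := by
          rw [Fin.lt_def] at hst ⊢
          rw [Fin.val_succ, Fin.val_succ]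
          omega
        rw [if_pos hst', if_pos hst]
        have hk0 : 0 < k := by
          have h1 : (s : ℕ) < (t : ℕ) := hst
          have h2 := t.isLt
          omega
        obtain ⟨m, rfl⟩ : ∃ m, k = m + 1 := ⟨k - 1, by omega⟩
        rw [show pairTuple v (Fin.succ s) (Fin.succ t) =
            (Fin.cons (VBDer.ofEnd Φ) (pairTuple w s t)) ∘ (Equiv.swap (0 : Fin (m + 2)) 1)
            from funext fun l => ?_,
          mu'.map_swap (Fin.cons (VBDer.ofEnd Φ) (pairTuple w s t)) (show (0 : Fin (m + 2)) ≠ 1 from by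
            intro hc
            exact absurd (congrArg Fin.val hc) (by norm_num)),
          hass Φ (pairTuple w s t), smul_neg, Fin.val_succ, Fin.val_succ,
          sgn_congr (show ((s : ℕ) + 1 + ((t : ℕ) + 1)) % 2 = ((s : ℕ) + (t : ℕ)) % 2
            from by omega) (Φ (lam fun i => (pairTuple w s t i).X))]
        · rfl
        · refine Fin.cases ?_ (fun a => ?_) l
          · rw [pairTuple_apply_zero _ _ _ _ rfl, hvs, hvs]
            simp only [Function.comp_apply]
            rw [show Equiv.swap (0 : Fin (m + 2)) 1 0 = 1 from Equiv.swap_apply_left _ _,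
              show (1 : Fin (m + 2)) = Fin.succ 0 from rfl, Fin.cons_succ,
              pairTuple_apply_zero _ _ _ _ rfl]
          · by_cases ha0 : a = 0
            · subst ha0
              simp only [Function.comp_apply]
              rw [pairTuple_apply_ne _ _ _ _ (by rw [Fin.val_succ]; omega),
                show dIdx (Fin.succ s) (Fin.succ t) (Fin.succ 0) = 0 from Fin.ext (by
                  simp only [dIdx_val, Fin.val_succ, Fin.val_zero]
                  simp), hv0,
                show Equiv.swap (0 : Fin (m + 2)) 1 (Fin.succ 0) = 0 from by
                  rw [show (Fin.succ (0 : Fin (m + 1)) : Fin (m + 2)) = 1 from rfl]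
                  exact Equiv.swap_apply_right _ _,
                Fin.cons_zero]
            · simp only [Function.comp_apply]
              have hane : Fin.succ a ≠ 0 := Fin.succ_ne_zero a
              have hane1 : Fin.succ a ≠ 1 := by
                intro hc
                apply ha0
                apply Fin.ext
                have hcv := congrArg Fin.val hc
                simp only [Fin.val_succ, Fin.val_one, Fin.val_zero] at hcv ⊢
                omega
              rw [show Equiv.swap (0 : Fin (m + 2)) 1 (Fin.succ a) = Fin.succ a from
                Equiv.swap_apply_of_ne_of_ne hane hane1, Fin.cons_succ,
                pairTuple_apply_ne _ _ _ _ (by rw [Fin.val_succ]; omega),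
                pairTuple_apply_ne _ _ _ _ (fun hc => ha0 (Fin.ext (by
                  simp only [Fin.val_zero]
                  exact hc))),
                show dIdx (Fin.succ s) (Fin.succ t) (Fin.succ a) = Fin.succ (dIdx s t a) from
                  Fin.ext (by
                    simp only [dIdx_val, Fin.val_succ]
                    have ha : (a : ℕ) ≠ 0 := fun hc => ha0 (Fin.ext hc)
                    have := a.isLt
                    split_ifs <;> omega), hvs]
      · have hst' : ¬ Fin.succ s < Fin.succ t := by
          rw [Fin.lt_def] at hst ⊢
          rw [Fin.val_succ, Fin.val_succ]
          omega
        rw [if_neg hst', if_neg hst]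
  show (∑ i : Fin (k + 2), ((-1 : ℤ) ^ (i : ℕ)) • (v i).D (mu' fun l => v (i.succAbove l))) +
      (∑ i : Fin (k + 2), ∑ j : Fin (k + 2),
        if i < j then ((-1 : ℤ) ^ ((i : ℕ) + (j : ℕ))) • mu' (pairTuple v i j) else 0) =
      Φ (mu' w - dF (jStar lam) w)
  rw [hS1, hS2]
  have hRHS : Φ (mu' w - dF (jStar lam) w) =
      Φ (mu' w) - (∑ s : Fin (k + 1), ((-1 : ℤ) ^ (s : ℕ)) • Φ ((w s).D (lam (Ws w s))))
        - ∑ s : Fin (k + 1), ∑ t : Fin (k + 1),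
            (if s < t then ((-1 : ℤ) ^ ((s : ℕ) + (t : ℕ))) • Φ (lam (Pt w s t)) else 0) := by
    rw [map_sub, sub_sub]
    congr 1
    show Φ ((∑ s : Fin (k + 1), ((-1 : ℤ) ^ (s : ℕ)) •
        (w s).D (jStar lam fun l => w (s.succAbove l))) +
      ∑ s : Fin (k + 1), ∑ t : Fin (k + 1),
        (if s < t then ((-1 : ℤ) ^ ((s : ℕ) + (t : ℕ))) • jStar lam (pairTuple w s t) else 0)) = _
    rw [map_add, map_sum, map_sum]
    congr 1
    · refine Finset.sum_congr rfl fun s _ => ?_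
      rw [map_zsmul]
      rfl
    · refine Finset.sum_congr rfl fun s _ => ?_
      rw [map_sum]
      refine Finset.sum_congr rfl fun t _ => ?_
      by_cases hst : s < t
      · rw [if_pos hst, if_pos hst, map_zsmul]
        rfl
      · rw [if_neg hst, if_neg hst, map_zero]
  rw [hRHS]
  have hcomb : (∑ s : Fin (k + 1), ((-1 : ℤ) ^ ((s : ℕ) + 1)) • (w s).D (Φ (lam (Ws w s))))
      + (∑ t : Fin (k + 1), ((-1 : ℤ) ^ ((t : ℕ) + 1)) •
          (Φ ((w t).D (lam (Ws w t))) - (w t).D (Φ (lam (Ws w t)))))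
      = -∑ s : Fin (k + 1), ((-1 : ℤ) ^ (s : ℕ)) • Φ ((w s).D (lam (Ws w s))) := by
    rw [← Finset.sum_add_distrib, ← Finset.sum_neg_distrib]
    refine Finset.sum_congr rfl fun s _ => ?_
    rw [← smul_add, show (w s).D (Φ (lam (Ws w s))) +
        (Φ ((w s).D (lam (Ws w s))) - (w s).D (Φ (lam (Ws w s)))) =
        Φ ((w s).D (lam (Ws w s))) from by abel, sgn_neg]
  have hneg : (∑ s : Fin (k + 1), ∑ t : Fin (k + 1),
      (if s < t then -(((-1 : ℤ) ^ ((s : ℕ) + (t : ℕ))) • Φ (lam (Pt w s t))) else 0))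
      = -∑ s : Fin (k + 1), ∑ t : Fin (k + 1),
          (if s < t then ((-1 : ℤ) ^ ((s : ℕ) + (t : ℕ))) • Φ (lam (Pt w s t)) else 0) := by
    rw [← Finset.sum_neg_distrib]
    refine Finset.sum_congr rfl fun s _ => ?_
    rw [← Finset.sum_neg_distrib]
    refine Finset.sum_congr rfl fun t _ => ?_
    by_cases hst : s < t
    · rw [if_pos hst, if_pos hst]
    · rw [if_neg hst, if_neg hst, neg_zero]
  rw [hneg]
  rw [show Φ (mu' w) + ∑ s : Fin (k + 1), ((-1 : ℤ) ^ ((s : ℕ) + 1)) •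
        (w s).D (Φ (lam (Ws w s))) +
      ((∑ t : Fin (k + 1), ((-1 : ℤ) ^ ((t : ℕ) + 1)) •
          (Φ ((w t).D (lam (Ws w t))) - (w t).D (Φ (lam (Ws w t))))) +
        -∑ s : Fin (k + 1), ∑ t : Fin (k + 1),
          (if s < t then ((-1 : ℤ) ^ ((s : ℕ) + (t : ℕ))) • Φ (lam (Pt w s t)) else 0)) =
      Φ (mu' w) + ((∑ s : Fin (k + 1), ((-1 : ℤ) ^ ((s : ℕ) + 1)) •
        (w s).D (Φ (lam (Ws w s)))) +
        (∑ t : Fin (k + 1), ((-1 : ℤ) ^ ((t : ℕ) + 1)) •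
          (Φ ((w t).D (lam (Ws w t))) - (w t).D (Φ (lam (Ws w t)))))) +
        -∑ s : Fin (k + 1), ∑ t : Fin (k + 1),
          (if s < t then ((-1 : ℤ) ^ ((s : ℕ) + (t : ℕ))) • Φ (lam (Pt w s t)) else 0)
    from by abel, hcomb]
  abel

end DFAux

end Main8

/-- Assume the symbol map is surjective. (a) For every `E`-valued
alternating `k`-form `λ` on `Der(R)`, the form `𝕕(𝕛*λ)` is a vector bundle form in
`Ω^{k+1}_𝔍` whose (unique) associated map is `λ` itself. (b) Every vector bundle form
`μ ∈ Ω^{k+1}_𝔍` decomposes as `μ = 𝕛*(λ_{𝕕μ}) + 𝕕(𝕛*λ_μ)`. -/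
theorem vb_form_decomposition (R E : Type*) [CommRing R] [Algebra ℝ R]
    [AddCommGroup E] [Module ℝ E] [Module R E] [IsScalarTower ℝ R E]
    (hsurj : SymbolSurj R E) (k : ℕ) :
    (∀ lam : (Fin k → Derivation ℝ R R) → E, IsMultAlt R lam →
      IsVBForm (dF (jStar lam)) ∧ IsAssoc (dF (jStar lam)) lam ∧
      (∀ lam' : (Fin k → Derivation ℝ R R) → E,
        IsMultAlt R lam' → IsAssoc (dF (jStar lam)) lam' → lam' = lam)) ∧
    (∀ μ : (Fin (k + 1) → VBDer R E) → E, IsMultAlt R μ →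
      ∀ (lam : (Fin k → Derivation ℝ R R) → E)
        (lam₀ : (Fin (k + 1) → Derivation ℝ R R) → E),
        IsMultAlt R lam → IsAssoc μ lam →
        IsMultAlt R lam₀ → IsAssoc (dF μ) lam₀ →
          μ = jStar lam₀ + dF (jStar lam)) := by
  constructor
  · intro lam hlam
    refine ⟨⟨DFAux.isMultAlt_dF_jStar lam hlam, lam, hlam, DFAux.isAssoc_dF_jStar lam hlam⟩,
      DFAux.isAssoc_dF_jStar lam hlam, ?_⟩
    intro lam' _ hass'
    exact DFAux.assoc_unique hsurj (dF (jStar lam)) lam lam'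
      (DFAux.isAssoc_dF_jStar lam hlam) hass'
  · intro μ hμ lam lam₀ hlam hassμ hlam₀ hass₀
    obtain ⟨mu', hmu⟩ := hμ
    subst hmu
    funext w
    have hkey := DFAux.key_lemma mu' lam hassμ LinearMap.id w
    have h0 := hass₀ LinearMap.id w
    rw [hkey] at h0
    rw [LinearMap.id_apply, LinearMap.id_apply] at h0
    show mu' w = jStar lam₀ w + dF (jStar lam) w
    exact sub_eq_iff_eq_add.mp h0
end
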